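/- arXiv:2506.16992 — 8 statements merged into one kernel-verified Lean document; each statement's English description precedes it below -/
import Mathlib

section
/- Let (V,H) be a finite-dimensional complex Hermitian space, ι : W ↪ V an injective linear map, and Φ : W × V → ℂ a sesquilinear map. Extend H to a Hermitian form G on V ⊕ W by G(v'+w', v+w) = H(v',v) + Φ(w',v) + conj(Φ(w,v')). Assume that the restriction of Φ to W × ιW is nondegenerate. Then the projection V ⊕ W → V induces an isometry of Hermitian spaces from ((ιW ⊕ W)^⊥_G, G) onto (W^⊥_Φ, H), where W^⊥_Φ = {v ∈ V : Φ(w,v)=0 for all w ∈ W}. Moreover, G is nondegenerate on V ⊕ W if and only if H restricted to W^⊥_Φ × W^⊥_Φ is nondegenerate. -/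
/-!
Nondegeneracy of `Φ` on `W × ιW` makes `y ↦ Φ(y, ι ·)` a bijection of `W` onto its dual, and
makes every conjugate-linear functional on `W` of the form `Φ(·, ι w₀)`, so that
`V = ιW + W^⊥_Φ`. A vector `(v, y)` is `G`-orthogonal to `ιW ⊕ W` iff `v ∈ W^⊥_Φ` and
`Φ(y, ι ·) = -H(v, ι ·)`; hence every `v ∈ W^⊥_Φ` has exactly one such lift, and on lifts the
`Φ`-terms of `G` vanish. A lift of `v` is already orthogonal to `ιW ⊕ W`, so by
`V = ιW + W^⊥_Φ` it lies in the radical of `G` iff `H(·, v)` vanishes on `W^⊥_Φ`.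
-/

open LinearMap

section
variable {K M N : Type*} [Field K] [AddCommGroup M] [Module K M] [AddCommGroup N] [Module K N]
  [FiniteDimensional K N] {σ : K →+* K} [RingHomSurjective σ]

-- A functional outside the range would, by double duality, be detected by a nonzero `n : N`
-- killed by every `B m`.
theorem LinearMap.SeparatingRight.surjective {B : M →ₛₗ[σ] N →ₗ[K] K} (hB : B.SeparatingRight) :
    Function.Surjective B := by
  have hcoann : (range B).dualCoannihilator = ⊥ :=
    eq_bot_iff.2 fun n hn ↦ hB n fun m ↦ (Submodule.mem_dualCoannihilator n).1 hn _ ⟨m, rfl⟩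
  rw [← range_eq_top, ← Subspace.dualCoannihilator_dualAnnihilator_eq (W := range B), hcoann,
    Submodule.dualAnnihilator_bot]

theorem LinearMap.Nondegenerate.bijective {B : M →ₛₗ[σ] N →ₗ[K] K} (hB : B.Nondegenerate) :
    Function.Bijective B :=
  ⟨ker_eq_bot.1 (separatingLeft_iff_ker_eq_bot.1 hB.1), hB.2.surjective⟩
end

section
variable {M N : Type*} [AddCommGroup M] [Module ℂ M] [AddCommGroup N] [Module ℂ N]

def LinearMap.conjFlip (B : M →ₗ⋆[ℂ] N →ₗ[ℂ] ℂ) : N →ₗ⋆[ℂ] M →ₗ[ℂ] ℂ :=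
  mk₂'ₛₗ (starRingEnd ℂ) (RingHom.id ℂ) (fun n m ↦ starRingEnd ℂ (B m n))
    (by simp) (by simp) (by simp) (by simp)

@[simp]
lemma LinearMap.conjFlip_apply (B : M →ₗ⋆[ℂ] N →ₗ[ℂ] ℂ) (n : N) (m : M) :
    B.conjFlip n m = starRingEnd ℂ (B m n) := rfl

lemma LinearMap.SeparatingLeft.exists_flip_eq [FiniteDimensional ℂ M] {B : M →ₗ⋆[ℂ] N →ₗ[ℂ] ℂ}
    (hB : B.SeparatingLeft) (g : M →ₗ⋆[ℂ] ℂ) : ∃ n, B.flip n = g := by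
  have hB' : B.conjFlip.SeparatingRight := fun m hm ↦ hB m fun n ↦ by simpa using hm n
  obtain ⟨n, hn⟩ := hB'.surjective ((starLinearEquiv ℂ (A := ℂ)).toLinearMap.comp g)
  exact ⟨n, ext fun m ↦ (starRingEnd ℂ).injective (by simpa using congr($hn m))⟩
end

section
variable {V W : Type*} [AddCommGroup V] [Module ℂ V] [AddCommGroup W] [Module ℂ W]
  {H : V →ₗ⋆[ℂ] V →ₗ[ℂ] ℂ} {ι : W →ₗ[ℂ] V} {Φ : W →ₗ⋆[ℂ] V →ₗ[ℂ] ℂ}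

variable (H Φ) in
def extendedForm : V × W →ₗ⋆[ℂ] V × W →ₗ[ℂ] ℂ :=
  (H ∘ₛₗ fst ℂ V W).compl₂ (fst ℂ V W) + (Φ ∘ₛₗ snd ℂ V W).compl₂ (fst ℂ V W) +
    ((Φ ∘ₛₗ snd ℂ V W).compl₂ (fst ℂ V W)).conjFlip

@[simp]
lemma extendedForm_apply (x y : V × W) :
    extendedForm H Φ x y = H x.1 y.1 + Φ x.2 y.1 + starRingEnd ℂ (Φ y.2 x.1) := rfl

theorem extendedForm_perp_iff (hH : H.IsSymm) (x : V × W) :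
    (∀ w w' : W, extendedForm H Φ (ι w, w') x = 0) ↔
      (∀ w, Φ w x.1 = 0) ∧ Φ.compl₂ ι x.2 = -(H x.1 ∘ₗ ι) := by
  simp only [extendedForm_apply, LinearMap.ext_iff, compl₂_apply, LinearMap.neg_apply,
    comp_apply]
  constructor
  · intro h
    refine ⟨fun w' ↦ by simpa using h 0 w', fun w ↦ (starRingEnd ℂ).injective ?_⟩
    rw [map_neg, hH.eq]
    have h0 := h w 0
    simp only [map_zero, LinearMap.zero_apply, add_zero] at h0
    linear_combination h0
  · rintro ⟨h₁, h₂⟩ w w'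
    rw [h₁, h₂, map_neg, hH.eq]
    ring

theorem extendedForm_eq_of_perp {x y : V × W} (hx : ∀ w, Φ w x.1 = 0) (hy : ∀ w, Φ w y.1 = 0) :
    extendedForm H Φ x y = H x.1 y.1 := by
  simp [hx, hy]

theorem existsUnique_extendedForm_perp_fst_eq [FiniteDimensional ℂ W] (hH : H.IsSymm)
    (hΦ : (Φ.compl₂ ι).Nondegenerate) {v : V} (hv : ∀ w, Φ w v = 0) :
    ∃! x : V × W, (∀ w w' : W, extendedForm H Φ (ι w, w') x = 0) ∧ x.1 = v := by
  obtain ⟨y, hy, hy_unique⟩ := hΦ.bijective.existsUnique (-(H v ∘ₗ ι))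
  refine ⟨(v, y), ⟨(extendedForm_perp_iff hH _).2 ⟨hv, hy⟩, rfl⟩, ?_⟩
  rintro ⟨v', y'⟩ ⟨hx, rfl : v' = v⟩
  exact Prod.ext rfl (hy_unique y' ((extendedForm_perp_iff hH _).1 hx).2)

theorem extendedForm_eq_zero_of_perp [FiniteDimensional ℂ W] (hl : (Φ.compl₂ ι).SeparatingLeft)
    {x : V × W} (hx : ∀ w w' : W, extendedForm H Φ (ι w, w') x = 0)
    (hHx : ∀ u, (∀ w, Φ w u = 0) → H u x.1 = 0) (z : V × W) : extendedForm H Φ z x = 0 := by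
  obtain ⟨w₀, hw₀⟩ := hl.exists_flip_eq (Φ.flip z.1)
  have hu (w : W) : Φ w (z.1 - ι w₀) = 0 := by
    simpa [sub_eq_zero] using congr($hw₀ w).symm
  have hz : z = (ι w₀, 0) + (z.1 - ι w₀, z.2) := by ext <;> simp
  rw [hz, map_add, LinearMap.add_apply, hx, extendedForm_apply, hHx _ hu, hu]
  simpa using hx 0 z.2

theorem eq_zero_of_forall_extendedForm_eq_zero (hH : H.IsSymm) (hl : (Φ.compl₂ ι).SeparatingLeft)
    (hHnd : ∀ v, (∀ w, Φ w v = 0) → (∀ u, (∀ w, Φ w u = 0) → H u v = 0) → v = 0)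
    {x : V × W} (hx : ∀ z, extendedForm H Φ z x = 0) : x = 0 := by
  obtain ⟨hx₁, hx₂⟩ := (extendedForm_perp_iff hH x).1 fun w w' ↦ hx _
  have hv : x.1 = 0 := hHnd _ hx₁ fun u hu ↦ by simpa [hu] using hx (u, 0)
  have hy : x.2 = 0 := hl _ fun w ↦ by simpa [hv] using congr($hx₂ w)
  exact Prod.ext hv hy

end

theorem stmt_3_general {V W : Type*} [AddCommGroup V] [Module ℂ V]
    [AddCommGroup W] [Module ℂ W] [FiniteDimensional ℂ W]
    (H : V →ₗ⋆[ℂ] V →ₗ[ℂ] ℂ) (hHerm : H.IsSymm)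
    (ι : W →ₗ[ℂ] V)
    (Φ : W →ₗ⋆[ℂ] V →ₗ[ℂ] ℂ)
    (G : V × W → V × W → ℂ)
    (hG : ∀ x y : V × W, G x y = H x.1 y.1 + Φ x.2 y.1 + (starRingEnd ℂ) (Φ y.2 x.1))
    (hΦl : ∀ w : W, (∀ y : W, Φ w (ι y) = 0) → w = 0)
    (hΦr : ∀ y : W, (∀ w : W, Φ w (ι y) = 0) → y = 0) :
    -- the projection maps (ιW ⊕ W)^⊥_G into W^⊥_Φ …
    (∀ x : V × W, (∀ w w' : W, G (ι w, w') x = 0) → (∀ w : W, Φ w x.1 = 0)) ∧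
    -- … bijectively …
    (∀ v : V, (∀ w : W, Φ w v = 0) →
      ∃! x : V × W, (∀ w w' : W, G (ι w, w') x = 0) ∧ x.1 = v) ∧
    -- … and isometrically …
    (∀ x y : V × W, (∀ w w' : W, G (ι w, w') x = 0) → (∀ w w' : W, G (ι w, w') y = 0) →
      G x y = H x.1 y.1) ∧
    -- … and G is nondegenerate iff H is nondegenerate on W^⊥_Φ.
    ((∀ x : V × W, (∀ y : V × W, G y x = 0) → x = 0) ↔
      (∀ v : V, (∀ w : W, Φ w v = 0) →
        (∀ u : V, (∀ w : W, Φ w u = 0) → H u v = 0) → v = 0)) := by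
  obtain rfl : G = fun x y ↦ extendedForm H Φ x y := funext₂ hG
  have hΦ : (Φ.compl₂ ι).Nondegenerate := ⟨hΦl, hΦr⟩
  have proj_mem (x : V × W) (hx : ∀ w w' : W, extendedForm H Φ (ι w, w') x = 0) :
      ∀ w, Φ w x.1 = 0 :=
    ((extendedForm_perp_iff hHerm x).1 hx).1
  refine ⟨proj_mem, fun v hv ↦ existsUnique_extendedForm_perp_fst_eq hHerm hΦ hv,
    fun x y hx hy ↦ extendedForm_eq_of_perp (proj_mem x hx) (proj_mem y hy), ?_, ?_⟩
  · intro hGnd v hv hHv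
    obtain ⟨x, ⟨hx, rfl⟩, -⟩ := existsUnique_extendedForm_perp_fst_eq hHerm hΦ hv
    exact congr(Prod.fst $(hGnd x (extendedForm_eq_zero_of_perp hΦl hx hHv)))
  · exact fun hHnd x hx ↦ eq_zero_of_forall_extendedForm_eq_zero hHerm hΦl hHnd hx

/-- Lemma `l.trivial`: extend a Hermitian form `H` on `V` to the Hermitian
form `G = [[H, Φ*],[Φ, 0]]` on `V ⊕ W` using a sesquilinear pairing `Φ : W × V → ℂ`.
If `Φ|_{W × ιW}` is nondegenerate, then the projection `V ⊕ W → V` induces an isometry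
`((ιW ⊕ W)^⊥_G, G) ≃ (W^⊥_Φ, H)`, and `G` is nondegenerate iff `H` is nondegenerate on
`W^⊥_Φ`. -/
theorem stmt_3 {V W : Type*} [AddCommGroup V] [Module ℂ V] [FiniteDimensional ℂ V]
    [AddCommGroup W] [Module ℂ W] [FiniteDimensional ℂ W]
    (H : V →ₗ⋆[ℂ] V →ₗ[ℂ] ℂ) (hHerm : H.IsSymm)
    (ι : W →ₗ[ℂ] V) (hι : Function.Injective ι)
    (Φ : W →ₗ⋆[ℂ] V →ₗ[ℂ] ℂ)
    (G : V × W → V × W → ℂ)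
    (hG : ∀ x y : V × W, G x y = H x.1 y.1 + Φ x.2 y.1 + (starRingEnd ℂ) (Φ y.2 x.1))
    (hΦl : ∀ w : W, (∀ y : W, Φ w (ι y) = 0) → w = 0)
    (hΦr : ∀ y : W, (∀ w : W, Φ w (ι y) = 0) → y = 0) :
    -- the projection maps (ιW ⊕ W)^⊥_G into W^⊥_Φ …
    (∀ x : V × W, (∀ w w' : W, G (ι w, w') x = 0) → (∀ w : W, Φ w x.1 = 0)) ∧
    -- … bijectively …
    (∀ v : V, (∀ w : W, Φ w v = 0) →
      ∃! x : V × W, (∀ w w' : W, G (ι w, w') x = 0) ∧ x.1 = v) ∧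
    -- … and isometrically …
    (∀ x y : V × W, (∀ w w' : W, G (ι w, w') x = 0) → (∀ w w' : W, G (ι w, w') y = 0) →
      G x y = H x.1 y.1) ∧
    -- … and G is nondegenerate iff H is nondegenerate on W^⊥_Φ.
    ((∀ x : V × W, (∀ y : V × W, G y x = 0) → x = 0) ↔
      (∀ v : V, (∀ w : W, Φ w v = 0) →
        (∀ u : V, (∀ w : W, Φ w u = 0) → H u v = 0) → v = 0)) :=
  stmt_3_general H hHerm ι Φ G hG hΦl hΦr
end

section
/- Let V be a finite-dimensional complex vector space, ι : W ↪ V an injective linear map, and H_t (t in an open real interval I containing 0) a family of Hermitian forms on V such that for each t ∈ I: ιW is a nondegenerate subspace for H_t, and H_t is positive semidefinite on (ιW)^⊥_{H_t}. Suppose the derivative H'_0 = (d/dt)|_{t=0} H_t exists. Then any v₀ ∈ (ιW)^⊥_{H_0} with H_0(v₀,v₀)=0 also satisfies H'_0(v₀,v₀)=0. In particular, if H'_0 is definite (positive or negative) on (ιW)^⊥_{H_0}, then H_0 is positive definite on (ιW)^⊥_{H_0}. -/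
/-!
Project `v₀` onto `(ιW)^⊥_{H_t}` along `ιW`: with `e` a basis of `W`, `G_t` the Gram matrix
of `H_t` on `ι ∘ e` and `c(t) = G_t⁻¹ (H_t(ι e_k, v₀))_k`, the vector
`p_t = v₀ - ∑ c_j(t) ι e_j` satisfies `H_t(p_t, p_t) = H_t(v₀, v₀) - ∑ c_j(t) H_t(v₀, ι e_j)`.
Both `c_j` and `H_t(v₀, ι e_j)` vanish at `0`, the first continuously and the second
differentiably, so the correction is `o(t)` and `H'₀(v₀, v₀)` is the derivative at `0` of
`t ↦ H_t(p_t, p_t)`. That function is real with real part `≥ 0 = H_0(v₀, v₀)` by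
semidefiniteness, so its derivative at `0` vanishes.
-/

open Filter Topology Asymptotics Matrix

section GramMatrix

variable {𝕜 V : Type*} [Field 𝕜] [StarRing 𝕜] [AddCommGroup V] [Module 𝕜 V] {κ : Type*}

def gramMatrix (B : V →ₗ⋆[𝕜] V →ₗ[𝕜] 𝕜) (u : κ → V) : Matrix κ κ 𝕜 :=
  Matrix.of fun i j => B (u i) (u j)

theorem apply_eq_zero_of_forall_basis {B : V →ₗ⋆[𝕜] V →ₗ[𝕜] 𝕜} {W : Type*}
    [AddCommGroup W] [Module 𝕜 W] (ι : W →ₗ[𝕜] V) (e : Module.Basis κ 𝕜 W) {w : V}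
    (h : ∀ i, B (ι (e i)) w = 0) (x : W) : B (ι x) w = 0 :=
  LinearMap.congr_fun (e.ext (f₁ := B.flip w ∘ₛₗ ι) (f₂ := 0) h) x

variable [Fintype κ] [DecidableEq κ]

noncomputable def gramCoeffs (B : V →ₗ⋆[𝕜] V →ₗ[𝕜] 𝕜) (u : κ → V) (v : V) :
    κ → 𝕜 :=
  (gramMatrix B u)⁻¹ *ᵥ fun k => B (u k) v

/-- The component of `v` in the `B`-orthogonal of `span u`, along `span u`. -/
noncomputable def orthProj (B : V →ₗ⋆[𝕜] V →ₗ[𝕜] 𝕜) (u : κ → V) (v : V) : V :=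
  v - ∑ j, gramCoeffs B u v j • u j

variable {B : V →ₗ⋆[𝕜] V →ₗ[𝕜] 𝕜} {u : κ → V}

theorem gramCoeffs_eq_zero {v : V} (hv : ∀ k, B (u k) v = 0) :
    gramCoeffs B u v = 0 := by
  simp only [gramCoeffs, hv]
  exact mulVec_zero _

theorem apply_orthProj_eq_zero (h : IsUnit (gramMatrix B u).det) (v : V) (i : κ) :
    B (u i) (orthProj B u v) = 0 := by
  have hsolve : gramMatrix B u *ᵥ gramCoeffs B u v = fun k => B (u k) v := by
    rw [gramCoeffs, mulVec_mulVec, mul_nonsing_inv _ h, one_mulVec]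
  have := congrFun hsolve i
  simp only [mulVec, dotProduct, gramMatrix, of_apply] at this
  simp only [orthProj, map_sub, map_sum, map_smul, smul_eq_mul, ← this, mul_comm,
    sub_self]

theorem apply_orthProj_self (h : IsUnit (gramMatrix B u).det) (v : V) :
    B (orthProj B u v) (orthProj B u v) = B v v - ∑ j, gramCoeffs B u v j * B v (u j) := by
  calc B (orthProj B u v) (orthProj B u v) = B v (orthProj B u v) := by
        conv_lhs => arg 1; rw [orthProj]
        simp [map_sub, map_sum, map_smulₛₗ, apply_orthProj_eq_zero h]
    _ = _ := by simp [orthProj, map_sub, map_sum, map_smul, smul_eq_mul]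

theorem isUnit_det_gramMatrix {W : Type*} [AddCommGroup W] [Module 𝕜 W]
    (ι : W →ₗ[𝕜] V) (e : Module.Basis κ 𝕜 W)
    (hnd : ∀ x, (∀ y, B (ι y) (ι x) = 0) → x = 0) :
    IsUnit (gramMatrix B (ι ∘ e)).det := by
  rw [isUnit_iff_ne_zero]
  intro hdet
  obtain ⟨c, hc, hker⟩ := exists_mulVec_eq_zero_iff.2 hdet
  have hx : ∑ j, c j • e j = 0 := by
    refine hnd _ (apply_eq_zero_of_forall_basis ι e fun i => ?_)
    simpa [mulVec, dotProduct, gramMatrix, mul_comm] using congrFun hker i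
  exact hc (funext (Fintype.linearIndependent_iff.mp e.linearIndependent c hx))

end GramMatrix

section Continuity

variable {𝕜 V : Type*} [Field 𝕜] [StarRing 𝕜] [TopologicalSpace 𝕜] [AddCommGroup V]
  [Module 𝕜 V] {κ : Type*} {X : Type*} [TopologicalSpace X] {B : X → V →ₗ⋆[𝕜] V →ₗ[𝕜] 𝕜} {x₀ : X}

theorem continuousAt_gramMatrix (hB : ∀ v w, ContinuousAt (fun x => B x v w) x₀)
    (u : κ → V) : ContinuousAt (fun x => gramMatrix (B x) u) x₀ :=
  continuousAt_pi.2 fun i => continuousAt_pi.2 fun j => hB (u i) (u j)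

theorem continuousAt_gramCoeffs [Fintype κ] [DecidableEq κ] [IsTopologicalRing 𝕜]
    [ContinuousInv₀ 𝕜] (hB : ∀ v w, ContinuousAt (fun x => B x v w) x₀) {u : κ → V}
    (h : IsUnit (gramMatrix (B x₀) u).det) (v : V) :
    ContinuousAt (fun x => gramCoeffs (B x) u v) x₀ := by
  have hinv₀ : ContinuousAt Ring.inverse (gramMatrix (B x₀) u).det := by
    rw [Ring.inverse_eq_inv']
    exact continuousAt_inv₀ h.ne_zero
  have hinv : ContinuousAt (fun x => (gramMatrix (B x) u)⁻¹) x₀ :=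
    ContinuousAt.comp (f := fun x => gramMatrix (B x) u) (continuousAt_matrix_inv _ hinv₀)
      (continuousAt_gramMatrix hB u)
  have hrhs : ContinuousAt (fun x k => B x (u k) v) x₀ := continuousAt_pi.2 fun k => hB (u k) v
  exact (continuous_fst.matrix_mulVec continuous_snd).continuousAt.comp (hinv.prodMk hrhs)

end Continuity

theorem HasDerivAt.mul_of_tendsto_zero {𝕜 𝔸 : Type*} [NontriviallyNormedField 𝕜]
    [NormedRing 𝔸] [NormedAlgebra 𝕜 𝔸] {f g : 𝕜 → 𝔸} {g' : 𝔸} {x : 𝕜} (hf : Tendsto f (𝓝 x) (𝓝 0))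
    (hg : HasDerivAt g g' x) (hgx : g x = 0) : HasDerivAt (fun t => f t * g t) 0 x := by
  rw [hasDerivAt_iff_isLittleO]
  simpa [hgx] using ((isLittleO_one_iff 𝕜).2 hf).mul_isBigO hg.isBigO_sub

theorem Complex.im_eq_zero_of_hasDerivAt {f : ℝ → ℂ} {f' : ℂ} {x : ℝ}
    (hf : HasDerivAt f f' x) (hreal : ∀ᶠ t in 𝓝 x, (f t).im = 0) : f'.im = 0 :=
  ((Complex.imCLM.hasFDerivAt.comp_hasDerivAt x hf).congr_of_eventuallyEq
    (hreal.mono fun _ h => h.symm)).unique (hasDerivAt_const x 0)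

theorem IsLocalMin.re_eq_zero_of_hasDerivAt {f : ℝ → ℂ} {f' : ℂ} {x : ℝ}
    (hf : HasDerivAt f f' x) (hmin : IsLocalMin (fun t => (f t).re) x) : f'.re = 0 :=
  hmin.hasDerivAt_eq_zero (Complex.reCLM.hasFDerivAt.comp_hasDerivAt x hf)

theorem deriv_apply_self_eq_zero_of_isotropic {V W : Type*} [AddCommGroup V] [Module ℂ V]
    [AddCommGroup W] [Module ℂ W] [FiniteDimensional ℂ W] (ι : W →ₗ[ℂ] V)
    {H : ℝ → V →ₗ⋆[ℂ] V →ₗ[ℂ] ℂ} {H' : V →ₗ⋆[ℂ] V →ₗ[ℂ] ℂ} {t₀ : ℝ}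
    (hHerm : ∀ᶠ t in 𝓝 t₀, (H t).IsSymm)
    (hnd : ∀ x : W, (∀ y : W, H t₀ (ι y) (ι x) = 0) → x = 0)
    (hsemi : ∀ᶠ t in 𝓝 t₀, ∀ v : V, (∀ x : W, H t (ι x) v = 0) → 0 ≤ (H t v v).re)
    (hderiv : ∀ v w : V, HasDerivAt (fun t => H t v w) (H' v w) t₀)
    {v₀ : V} (hperp : ∀ x : W, H t₀ (ι x) v₀ = 0) (hiso : H t₀ v₀ v₀ = 0) :
    H' v₀ v₀ = 0 := by
  set e := Module.finBasis ℂ W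
  set u := ι ∘ e
  have hcont : ∀ v w, ContinuousAt (fun t => H t v w) t₀ := fun v w =>
    (hderiv v w).continuousAt
  have hunit₀ : IsUnit (gramMatrix (H t₀) u).det := isUnit_det_gramMatrix ι e hnd
  have hdet : ContinuousAt (fun t => (gramMatrix (H t) u).det) t₀ :=
    continuous_id.matrix_det.continuousAt.comp (continuousAt_gramMatrix hcont u)
  have hunit : ∀ᶠ t in 𝓝 t₀, IsUnit (gramMatrix (H t) u).det :=
    (hdet.eventually_ne hunit₀.ne_zero).mono fun _ => isUnit_iff_ne_zero.2
  have hc₀ : gramCoeffs (H t₀) u v₀ = 0 := gramCoeffs_eq_zero fun k => hperp (e k)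
  have hcorr : ∀ j, HasDerivAt (fun t => gramCoeffs (H t) u v₀ j * H t v₀ (u j)) 0 t₀ := by
    intro j
    refine HasDerivAt.mul_of_tendsto_zero ?_ (hderiv v₀ (u j)) ?_
    · simpa [hc₀] using (continuousAt_gramCoeffs hcont hunit₀ v₀).tendsto.apply_nhds j
    · rw [← hHerm.self_of_nhds.eq (u j) v₀]
      simp [u, hperp]
  have hf :=
    (hderiv v₀ v₀).fun_sub (HasDerivAt.fun_sum (u := Finset.univ) fun j _ => hcorr j)
  rw [Finset.sum_const_zero, sub_zero] at hf
  refine Complex.ext (IsLocalMin.re_eq_zero_of_hasDerivAt hf ?_)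
    (Complex.im_eq_zero_of_hasDerivAt (hderiv v₀ v₀)
      (hHerm.mono fun t ht => Complex.conj_eq_iff_im.mp (ht.eq v₀ v₀)))
  filter_upwards [hunit, hsemi] with t hunit_t hsemi_t
  rw [hc₀, ← apply_orthProj_self hunit_t]
  simpa [hiso] using
    hsemi_t _ (apply_eq_zero_of_forall_basis ι e (apply_orthProj_eq_zero hunit_t v₀))

theorem stmt_5_general {V W : Type*} [AddCommGroup V] [Module ℂ V]
    [AddCommGroup W] [Module ℂ W] [FiniteDimensional ℂ W]
    (ι : W →ₗ[ℂ] V)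
    (a b : ℝ) (ha : a < 0) (hb : 0 < b)
    (H : ℝ → (V →ₗ⋆[ℂ] V →ₗ[ℂ] ℂ))
    (hHerm : ∀ t ∈ Set.Ioo a b, (H t).IsSymm)
    (hnd : ∀ t ∈ Set.Ioo a b, ∀ x : W, (∀ y : W, H t (ι y) (ι x) = 0) → x = 0)
    (hsemi : ∀ t ∈ Set.Ioo a b, ∀ v : V, (∀ x : W, H t (ι x) v = 0) → 0 ≤ (H t v v).re)
    (H' : V →ₗ⋆[ℂ] V →ₗ[ℂ] ℂ)
    (hderiv : ∀ v w : V, HasDerivAt (fun t : ℝ => H t v w) (H' v w) 0) :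
    (∀ v₀ : V, (∀ x : W, H 0 (ι x) v₀ = 0) → H 0 v₀ v₀ = 0 → H' v₀ v₀ = 0) ∧
    (((∀ v : V, (∀ x : W, H 0 (ι x) v = 0) → v ≠ 0 → 0 < (H' v v).re) ∨
        (∀ v : V, (∀ x : W, H 0 (ι x) v = 0) → v ≠ 0 → (H' v v).re < 0)) →
      (∀ v : V, (∀ x : W, H 0 (ι x) v = 0) → v ≠ 0 → 0 < (H 0 v v).re)) := by
  have hI : Set.Ioo a b ∈ 𝓝 (0 : ℝ) := Ioo_mem_nhds ha hb
  have h₀ : (0 : ℝ) ∈ Set.Ioo a b := ⟨ha, hb⟩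
  have hderiv_iso : ∀ v₀ : V, (∀ x : W, H 0 (ι x) v₀ = 0) → H 0 v₀ v₀ = 0 → H' v₀ v₀ = 0 :=
    fun v₀ => deriv_apply_self_eq_zero_of_isotropic ι (eventually_of_mem hI hHerm) (hnd 0 h₀)
      (eventually_of_mem hI hsemi) hderiv
  refine ⟨hderiv_iso, fun hdef v hv hne => (hsemi 0 h₀ v hv).lt_of_ne fun hre => ?_⟩
  have hiso : H 0 v v = 0 :=
    Complex.ext hre.symm (Complex.conj_eq_iff_im.mp ((hHerm 0 h₀).eq v v))
  rcases hdef with hpos | hneg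
  · simpa [hderiv_iso v hv hiso] using hpos v hv hne
  · simpa [hderiv_iso v hv hiso] using hneg v hv hne

/-- Lemma `l.derivative`: let `H_t`, `t ∈ (a,b) ∋ 0`, be a family of
Hermitian forms on `V` such that for each `t`, `ιW` is a nondegenerate subspace for `H_t`
and `H_t` is positive semidefinite on `(ιW)^⊥_{H_t}`, and suppose the derivative `H'₀`
at `t = 0` exists. Then any `v₀ ∈ (ιW)^⊥_{H₀}` with `H₀(v₀,v₀) = 0` satisfies
`H'₀(v₀,v₀) = 0`. In particular, if `H'₀` is definite on `(ιW)^⊥_{H₀}`, then `H₀` is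
positive definite on `(ιW)^⊥_{H₀}`. -/
theorem stmt_5 {V W : Type*} [AddCommGroup V] [Module ℂ V] [FiniteDimensional ℂ V]
    [AddCommGroup W] [Module ℂ W] [FiniteDimensional ℂ W]
    (ι : W →ₗ[ℂ] V) (hι : Function.Injective ι)
    (a b : ℝ) (ha : a < 0) (hb : 0 < b)
    (H : ℝ → (V →ₗ⋆[ℂ] V →ₗ[ℂ] ℂ))
    (hHerm : ∀ t ∈ Set.Ioo a b, (H t).IsSymm)
    (hnd : ∀ t ∈ Set.Ioo a b, ∀ x : W, (∀ y : W, H t (ι y) (ι x) = 0) → x = 0)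
    (hsemi : ∀ t ∈ Set.Ioo a b, ∀ v : V, (∀ x : W, H t (ι x) v = 0) → 0 ≤ (H t v v).re)
    (H' : V →ₗ⋆[ℂ] V →ₗ[ℂ] ℂ)
    (hderiv : ∀ v w : V, HasDerivAt (fun t : ℝ => H t v w) (H' v w) 0) :
    (∀ v₀ : V, (∀ x : W, H 0 (ι x) v₀ = 0) → H 0 v₀ v₀ = 0 → H' v₀ v₀ = 0) ∧
    (((∀ v : V, (∀ x : W, H 0 (ι x) v = 0) → v ≠ 0 → 0 < (H' v v).re) ∨
        (∀ v : V, (∀ x : W, H 0 (ι x) v = 0) → v ≠ 0 → (H' v v).re < 0)) →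
      (∀ v : V, (∀ x : W, H 0 (ι x) v = 0) → v ≠ 0 → 0 < (H 0 v v).re)) :=
  stmt_5_general ι a b ha hb H hHerm hnd hsemi H' hderiv
end

section
/- The map r₋ sending a pair (H, Φ) ∈ Herm(V) × Sesq°(W,V) to the negative index of inertia of H restricted to W^⊥_Φ is lower semicontinuous; that is, for every a ∈ ℕ, the set of pairs with negative index of inertia at most a is closed in Herm(V) × Sesq°(W,V). -/
open Matrix

/-- The sesquilinear form on `ℂⁿ` associated to a matrix `H`. -/
noncomputable def matForm {n : ℕ} (H : Matrix (Fin n) (Fin n) ℂ) (x y : Fin n → ℂ) : ℂ :=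
  star x ⬝ᵥ H.mulVec y

/-- The pairing `W × V → ℂ` associated to a matrix `Φ : Matrix (Fin m) (Fin n) ℂ`. -/
noncomputable def matPairing {m n : ℕ} (Φ : Matrix (Fin m) (Fin n) ℂ) (w : Fin m → ℂ) (v : Fin n → ℂ) : ℂ :=
  star w ⬝ᵥ Φ.mulVec v

/-- `W^⊥_Φ = {v ∈ V : Φ(w,v) = 0 for all w ∈ W}`. -/
def perpPairing {m n : ℕ} (Φ : Matrix (Fin m) (Fin n) ℂ) : Set (Fin n → ℂ) :=
  {v | ∀ w : Fin m → ℂ, matPairing Φ w v = 0}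

/-- The negative index of inertia of the Hermitian form of `H` restricted to a subset `S`:
the maximal dimension of a negative definite subspace contained in `S`. -/
noncomputable def negInertiaOn {n : ℕ} (H : Matrix (Fin n) (Fin n) ℂ)
    (S : Set (Fin n → ℂ)) : ℕ :=
  sSup {d : ℕ | ∃ U : Submodule ℂ (Fin n → ℂ), (U : Set (Fin n → ℂ)) ⊆ S ∧
    Module.finrank ℂ U = d ∧ ∀ v ∈ U, v ≠ 0 → (matForm H v v).re < 0}

/-- The space `Herm(V) × Sesq°(W,V)` of pairs of a Hermitian form on `V = ℂⁿ` together
with a left-nondegenerate sesquilinear pairing `W × V → ℂ`, `W = ℂᵐ`, with its natural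
(subspace) topology, forms represented by matrices. -/
def HermSesq (n m : ℕ) : Type :=
  {p : Matrix (Fin n) (Fin n) ℂ × Matrix (Fin m) (Fin n) ℂ //
    p.1.IsHermitian ∧ ∀ w : Fin m → ℂ, (∀ v : Fin n → ℂ, matPairing p.2 w v = 0) → w = 0}

noncomputable instance (n m : ℕ) : TopologicalSpace (HermSesq n m) :=
  instTopologicalSpaceSubtype

/-
If `H₀` is negative definite on the image of a linear map `L : ℂ^(a+1) → ker Φ₀`, replace `L` by
`Q(Φ) ∘ L` with `Q(Φ) = det (Φ Φᴴ) • 1 - Φᴴ adj (Φ Φᴴ) Φ`. This matrix depends polynomially on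
`Φ`, always maps into `ker Φ`, and acts on `ker Φ₀` as the scalar `det (Φ₀ Φ₀ᴴ)`, which is nonzero
since `Φ₀` is left-nondegenerate. So `c ↦ H(Q(Φ) L c, Q(Φ) L c)` is negative definite at
`(H₀, Φ₀)`; being quadratic in `c`, this is a condition on the compact unit sphere, hence open in
`(H, Φ)`.
-/
open Filter Topology Matrix

theorem eventually_forall_ne_zero_neg_of_homogeneous {𝕜 X E : Type*} [RCLike 𝕜]
    [TopologicalSpace X] [NormedAddCommGroup E] [NormedSpace 𝕜 E] [ProperSpace E]
    {f : X → E → ℝ} (hf : Continuous (Function.uncurry f))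
    (hsmul : ∀ x (z : 𝕜) c, f x (z • c) = ‖z‖ ^ 2 * f x c)
    {x₀ : X} (h₀ : ∀ c ≠ 0, f x₀ c < 0) : ∀ᶠ x in 𝓝 x₀, ∀ c ≠ 0, f x c < 0 := by
  have hsphere : ∀ᶠ x in 𝓝 x₀, ∀ c ∈ Metric.sphere (0 : E) 1, f x c < 0 :=
    (isCompact_sphere 0 1).eventually_forall_of_forall_eventually fun c hc =>
      hf.continuousAt.eventually_lt continuousAt_const
        (h₀ c (ne_zero_of_mem_sphere one_ne_zero ⟨c, hc⟩))
  filter_upwards [hsphere] with x hx c hc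
  have hunit : (‖c‖⁻¹ : 𝕜) • c ∈ Metric.sphere (0 : E) 1 := by
    simpa using norm_smul_inv_norm (𝕜 := 𝕜) hc
  have hc0 : (‖c‖ : 𝕜) ≠ 0 := by exact_mod_cast norm_ne_zero_iff.mpr hc
  have hc' : c = (‖c‖ : 𝕜) • (‖c‖⁻¹ : 𝕜) • c := by rw [smul_smul, mul_inv_cancel₀ hc0, one_smul]
  rw [hc', hsmul]
  exact mul_neg_of_pos_of_neg (pow_pos (norm_pos_iff.mpr hc0) 2) (hx _ hunit)

section ScaledKerProj

variable {R m n : Type*} [CommRing R] [StarRing R] [Fintype m] [Fintype n]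
  [DecidableEq m] [DecidableEq n]

/-- `det (Φ Φᴴ)` times the orthogonal projection onto `ker Φ`, written with the adjugate so that
it is a polynomial in the entries of `Φ`. -/
noncomputable def scaledKerProj (Φ : Matrix m n R) : Matrix n n R :=
  (Φ * Φᴴ).det • 1 - Φᴴ * (Φ * Φᴴ).adjugate * Φ

theorem mul_scaledKerProj (Φ : Matrix m n R) : Φ * scaledKerProj Φ = 0 := by
  rw [scaledKerProj, Matrix.mul_sub, Matrix.mul_smul, Matrix.mul_one, ← Matrix.mul_assoc,
    ← Matrix.mul_assoc, Matrix.mul_adjugate, Matrix.smul_mul, Matrix.one_mul, sub_self]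

theorem mulVec_scaledKerProj_mulVec (Φ : Matrix m n R) (x : n → R) :
    Φ *ᵥ (scaledKerProj Φ *ᵥ x) = 0 := by
  rw [mulVec_mulVec, mul_scaledKerProj, zero_mulVec]

theorem scaledKerProj_mulVec_of_mulVec_eq_zero {Φ : Matrix m n R} {x : n → R}
    (hx : Φ *ᵥ x = 0) : scaledKerProj Φ *ᵥ x = (Φ * Φᴴ).det • x := by
  rw [scaledKerProj, sub_mulVec, smul_mulVec, one_mulVec, ← mulVec_mulVec, hx, mulVec_zero,
    sub_zero]

theorem continuous_scaledKerProj [TopologicalSpace R] [IsTopologicalRing R] [ContinuousStar R] :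
    Continuous (scaledKerProj : Matrix m n R → Matrix n n R) := by
  unfold scaledKerProj
  fun_prop

end ScaledKerProj

theorem det_mul_conjTranspose_ne_zero {K m n : Type*} [Field K] [StarRing K] [PartialOrder K]
    [StarOrderedRing K] [Fintype m] [Fintype n] [DecidableEq m] {Φ : Matrix m n K}
    (h : ∀ w, Φᴴ *ᵥ w = 0 → w = 0) : (Φ * Φᴴ).det ≠ 0 := by
  intro hdet
  obtain ⟨w, hw, hΦw⟩ := exists_mulVec_eq_zero_iff.mpr hdet
  refine hw (h w (dotProduct_star_self_eq_zero.mp ?_))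
  rw [star_mulVec, conjTranspose_conjTranspose, ← dotProduct_mulVec, mulVec_mulVec, hΦw,
    dotProduct_zero]

section MatrixForms

variable {m n : ℕ}

theorem re_matForm_smul_smul (H : Matrix (Fin n) (Fin n) ℂ) (z : ℂ) (x : Fin n → ℂ) :
    (matForm H (z • x) (z • x)).re = ‖z‖ ^ 2 * (matForm H x x).re := by
  rw [matForm, mulVec_smul, star_smul, smul_dotProduct, dotProduct_smul, smul_eq_mul,
    smul_eq_mul, ← mul_assoc, Complex.star_def, Complex.conj_mul', ← Complex.ofReal_pow,
    Complex.re_ofReal_mul, matForm]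

theorem matPairing_eq (Φ : Matrix (Fin m) (Fin n) ℂ) (w : Fin m → ℂ) (v : Fin n → ℂ) :
    matPairing Φ w v = star (Φᴴ *ᵥ w) ⬝ᵥ v := by
  rw [matPairing, dotProduct_mulVec, star_mulVec, conjTranspose_conjTranspose]

open scoped ComplexOrder in
theorem perpPairing_eq_ker (Φ : Matrix (Fin m) (Fin n) ℂ) :
    perpPairing Φ = LinearMap.ker Φ.mulVecLin := by
  ext v
  refine ⟨fun h => dotProduct_star_self_eq_zero.mp (h (Φ *ᵥ v)), fun h w => ?_⟩
  rw [SetLike.mem_coe, LinearMap.mem_ker, mulVecLin_apply] at h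
  rw [matPairing, h, dotProduct_zero]

theorem le_negInertiaOn_iff (H : Matrix (Fin n) (Fin n) ℂ) (K : Submodule ℂ (Fin n → ℂ))
    (k : ℕ) : k ≤ negInertiaOn H K ↔ ∃ L : (Fin k → ℂ) →ₗ[ℂ] Fin n → ℂ,
      (∀ c, L c ∈ K) ∧ ∀ c ≠ 0, (matForm H (L c) (L c)).re < 0 := by
  unfold negInertiaOn
  set s := {d : ℕ | ∃ U : Submodule ℂ (Fin n → ℂ), (U : Set (Fin n → ℂ)) ⊆ K ∧
    Module.finrank ℂ U = d ∧ ∀ v ∈ U, v ≠ 0 → (matForm H v v).re < 0}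
  have hbdd : BddAbove s := ⟨n, by
    rintro d ⟨U, -, rfl, -⟩
    simpa using U.finrank_le⟩
  constructor
  · intro hk
    have hne : s.Nonempty := ⟨0, ⊥, by simp, finrank_bot ℂ _,
      fun v hv hv0 => (hv0 ((Submodule.mem_bot ℂ).mp hv)).elim⟩
    obtain ⟨U, hUK, hU, hneg⟩ := Nat.sSup_mem hne hbdd
    obtain ⟨L, hL⟩ := finrank_le_iff_exists_linearMap.mp
      (by rwa [Module.finrank_fin_fun, hU] : Module.finrank ℂ (Fin k → ℂ) ≤ Module.finrank ℂ U)
    exact ⟨U.subtype ∘ₗ L, fun c => hUK (L c).2,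
      fun c hc => hneg _ (L c).2 (by simpa using (map_ne_zero_iff L hL).mpr hc)⟩
  · rintro ⟨L, hLK, hneg⟩
    have hL : Function.Injective L := by
      refine (injective_iff_map_eq_zero L).mpr fun c hc => ?_
      by_contra hc0
      simpa [hc, matForm] using hneg c hc0
    refine le_csSup hbdd ⟨LinearMap.range L, ?_, ?_, ?_⟩
    · rintro - ⟨c, rfl⟩
      exact hLK c
    · rw [LinearMap.finrank_range_of_inj hL, Module.finrank_fin_fun]
    · rintro - ⟨c, rfl⟩ hv
      exact hneg c (by rintro rfl; exact hv (map_zero L))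

open scoped ComplexOrder in
theorem HermSesq.det_ne_zero (p : HermSesq n m) : (p.val.2 * p.val.2ᴴ).det ≠ 0 :=
  det_mul_conjTranspose_ne_zero fun w hw =>
    p.2.2 w fun v => by rw [matPairing_eq, hw, star_zero, zero_dotProduct]

end MatrixForms

/-- Lemma `l.cont0`, case of `r₋`: the map sending a pair
`(H, Φ) ∈ Herm(V) × Sesq°(W,V)` to the negative index of inertia of `H` on `W^⊥_Φ` is
lower semicontinuous: for every `a ∈ ℕ`, the set of pairs with negative index of inertia
at most `a` is closed in `Herm(V) × Sesq°(W,V)`. -/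
theorem stmt_6 (n m : ℕ) (a : ℕ) :
    IsClosed {p : HermSesq n m | negInertiaOn p.val.1 (perpPairing p.val.2) ≤ a} := by
  simp_rw [← isOpen_compl_iff, Set.compl_ofPred, not_le, isOpen_iff_mem_nhds, Set.mem_ofPred_eq,
    perpPairing_eq_ker, Nat.lt_iff_add_one_le, le_negInertiaOn_iff, LinearMap.mem_ker,
    mulVecLin_apply]
  rintro p₀ ⟨L, hLker, hLneg⟩
  let Q : HermSesq n m → Matrix (Fin n) (Fin n) ℂ := fun p => scaledKerProj p.val.2
  have hcont : Continuous fun x : HermSesq n m × (Fin (a + 1) → ℂ) =>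
      (matForm x.1.val.1 (Q x.1 *ᵥ L x.2) (Q x.1 *ᵥ L x.2)).re := by
    have hp : Continuous fun p : HermSesq n m => p.val := continuous_subtype_val
    have hQ : Continuous Q := continuous_scaledKerProj.comp hp.snd
    have hv : Continuous fun x : HermSesq n m × (Fin (a + 1) → ℂ) => Q x.1 *ᵥ L x.2 :=
      (hQ.comp continuous_fst).matrix_mulVec (L.continuous_of_finiteDimensional.comp continuous_snd)
    exact Complex.continuous_re.comp
      (hv.star.dotProduct ((hp.fst.comp continuous_fst).matrix_mulVec hv))
  have hQ₀ : ∀ c, Q p₀ *ᵥ L c = (p₀.val.2 * p₀.val.2ᴴ).det • L c := fun c =>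
    scaledKerProj_mulVec_of_mulVec_eq_zero (hLker c)
  refine (eventually_forall_ne_zero_neg_of_homogeneous (𝕜 := ℂ)
    (f := fun p c => (matForm p.val.1 (Q p *ᵥ L c) (Q p *ᵥ L c)).re) hcont
    (fun p z c => by simp only [map_smul, mulVec_smul, re_matForm_smul_smul]) fun c hc => ?_).mono
    fun p hp => ⟨(Q p).mulVecLin ∘ₗ L, fun c => mulVec_scaledKerProj_mulVec _ _, hp⟩
  simp only [hQ₀, re_matForm_smul_smul]
  exact mul_neg_of_pos_of_neg (pow_pos (norm_pos_iff.mpr p₀.det_ne_zero) 2) (hLneg c hc)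
end

section
/- Let M be a commutative monoid with a multiplication-compatible preorder, and let f₀,…,f_n be an M-concave sequence. Let μ = (μ₁,…,μ_m) and ν = (ν₁,…,ν_m) be partitions (weakly decreasing sequences of nonnegative integers ≤ n) with |μ| = |ν| and dominance μ ≥ ν (∑_{i≤j} μ_i ≥ ∑_{i≤j} ν_i for all j). Then f_{ν₁} ⋯ f_{ν_m} ≥ f_{μ₁} ⋯ f_{μ_m} in M. -/
/-!
By Brylawski, `ν` is reached from `μ ⊵ ν` by moving single boxes down to later rows while staying
above `ν` in dominance order. Moving a box from row `a` to row `b` with `μ_b + 2 ≤ μ_a` replaces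
the factor `f_{μ_a} f_{μ_b}` by `f_{μ_a - 1} f_{μ_b + 1}`, which is at least as large by
`M`-concavity; the other factors are untouched, so the product can only grow. Each move lowers
the sum of all partial sums of `μ`, which makes the induction terminate.
-/

/-- Product `v 0 * v 1 * ⋯ * v m` of a nonempty tuple in a (possibly non-unital)
multiplicative structure. -/
def prodTuple {M : Type*} [Mul M] : ∀ {m : ℕ}, (Fin (m + 1) → M) → M
  | 0, v => v 0
  | _ + 1, v => prodTuple (fun i => v i.castSucc) * v (Fin.last _)

open Finset

section prodTuple

variable {M : Type*} [CommSemigroup M]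

theorem coe_prodTuple : ∀ {m : ℕ} (v : Fin (m + 1) → M),
    ((prodTuple v : M) : WithOne M) = ∏ i, (v i : WithOne M)
  | 0, v => by simp [prodTuple]
  | m + 1, v => by
    rw [prodTuple, WithOne.coe_mul, coe_prodTuple]
    exact (Fin.prod_univ_castSucc fun i => (v i : WithOne M)).symm

/-- The adjoined unit makes `prodTuple` a `Finset` product, so the two factors at `a` and `b` can
be split off; the (possibly empty) rest is either `1` or an element of `M`. -/
theorem prodTuple_le_prodTuple_of_mul_le [Preorder M] [MulLeftMono M] {m : ℕ}
    {v w : Fin (m + 1) → M} {a b : Fin (m + 1)} (hab : a ≠ b)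
    (hvw : ∀ i, i ≠ a → i ≠ b → v i = w i) (h : v a * v b ≤ w a * w b) :
    prodTuple v ≤ prodTuple w := by
  have split (u : Fin (m + 1) → M) :
      ((prodTuple u : M) : WithOne M) = (∏ i ∈ {a, b}ᶜ, (u i : WithOne M)) * ↑(u a * u b) := by
    rw [coe_prodTuple, ← prod_mul_prod_compl {a, b}, prod_pair hab, mul_comm, WithOne.coe_mul]
  have hrest : ∏ i ∈ {a, b}ᶜ, (v i : WithOne M) = ∏ i ∈ {a, b}ᶜ, (w i : WithOne M) :=
    prod_congr rfl fun i hi => by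
      simp only [mem_compl, mem_insert, mem_singleton, not_or] at hi
      rw [hvw i hi.1 hi.2]
  have hv := split v
  have hw := split w
  rw [hrest] at hv
  generalize ∏ i ∈ {a, b}ᶜ, (w i : WithOne M) = C at hv hw
  cases C using WithOne.recOneCoe with
  | one =>
    rw [one_mul, WithOne.coe_inj] at hv hw
    rwa [hv, hw]
  | coe c =>
    rw [← WithOne.coe_mul, WithOne.coe_inj] at hv hw
    rw [hv, hw]
    exact mul_le_mul_right h c

end prodTuple

section moveBox

variable {ι : Type*} [DecidableEq ι]

def moveBox (μ : ι → ℕ) (a b : ι) : ι → ℕ :=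
  Function.update (Function.update μ a (μ a - 1)) b (μ b + 1)

variable {μ : ι → ℕ} {a b : ι}

theorem moveBox_apply_left (hab : a ≠ b) : moveBox μ a b a = μ a - 1 := by
  simp [moveBox, hab]

theorem moveBox_apply_right : moveBox μ a b b = μ b + 1 := by
  simp [moveBox]

theorem moveBox_apply_of_ne {i : ι} (hia : i ≠ a) (hib : i ≠ b) : moveBox μ a b i = μ i := by
  simp [moveBox, hia, hib]

theorem moveBox_add_single (hab : a ≠ b) (ha : 0 < μ a) :
    moveBox μ a b + Pi.single a 1 = μ + Pi.single b 1 := by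
  ext i
  simp only [moveBox, Pi.add_apply, Function.update_apply, Pi.single_apply]
  split_ifs <;> subst_vars <;> simp_all; omega

theorem sum_moveBox_add (hab : a ≠ b) (ha : 0 < μ a) (s : Finset ι) :
    ∑ i ∈ s, moveBox μ a b i + (if a ∈ s then 1 else 0)
      = ∑ i ∈ s, μ i + (if b ∈ s then 1 else 0) := by
  have := congrArg (fun g : ι → ℕ => ∑ i ∈ s, g i) (moveBox_add_single hab ha)
  simpa only [Pi.add_apply, sum_add_distrib, sum_pi_single'] using this

theorem sum_moveBox [Fintype ι] (hab : a ≠ b) (ha : 0 < μ a) :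
    ∑ i, moveBox μ a b i = ∑ i, μ i := by
  simpa using sum_moveBox_add hab ha univ

end moveBox

section Dominance

variable {ι : Type*} [LinearOrder ι] [LocallyFiniteOrderBot ι]

def Dominates (μ ν : ι → ℕ) : Prop :=
  ∀ j, ∑ i ∈ Iic j, ν i ≤ ∑ i ∈ Iic j, μ i

variable {μ ν : ι → ℕ} {a b : ι}

theorem sum_Iic_moveBox_add (hab : a < b) (ha : 0 < μ a) (j : ι) :
    ∑ i ∈ Iic j, moveBox μ a b i + (if a ≤ j ∧ j < b then 1 else 0) = ∑ i ∈ Iic j, μ i := by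
  have := sum_moveBox_add hab.ne ha (Iic j)
  simp only [mem_Iic] at this
  by_cases hbj : b ≤ j
  · have haj : a ≤ j := hab.le.trans hbj
    simp only [haj, hbj, not_lt.2 hbj, and_false, if_true, if_false] at this ⊢
    omega
  · simp only [hbj, not_le.1 hbj, and_true, if_false] at this ⊢
    split_ifs at this ⊢ <;> omega

theorem sum_sum_Iic_moveBox_lt [Fintype ι] (hab : a < b) (ha : 0 < μ a) :
    ∑ j, ∑ i ∈ Iic j, moveBox μ a b i < ∑ j, ∑ i ∈ Iic j, μ i := by
  refine sum_lt_sum (fun j _ => ?_) ⟨a, mem_univ a, ?_⟩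
  · have := sum_Iic_moveBox_add hab ha j
    omega
  · have := sum_Iic_moveBox_add hab ha a
    simp only [le_refl, hab, and_self, ite_true] at this
    omega

/-- The box moves from the first row where `μ` and `ν` differ to the first row where `μ` is
shorter than `ν`. -/
theorem Dominates.exists_moveBox [Fintype ι] (hν : Antitone ν)
    (hsum : ∑ i, μ i = ∑ i, ν i) (hdom : Dominates μ ν) (hne : μ ≠ ν) :
    ∃ a b, a < b ∧ μ b + 2 ≤ μ a ∧ Dominates (moveBox μ a b) ν := by
  obtain ⟨a, ha_min⟩ := exists_minimal_of_wellFoundedLT (fun i => μ i ≠ ν i)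
    (Function.ne_iff.1 hne)
  have heq_lt_a : ∀ i < a, μ i = ν i := fun i hi => not_not.1 fun h => ha_min.not_lt h hi
  have hνa : ν a < μ a := by
    have h := hdom a
    have hIio : ∑ i ∈ Iio a, μ i = ∑ i ∈ Iio a, ν i :=
      sum_congr rfl fun i hi => heq_lt_a i (mem_Iio.1 hi)
    rw [← Iio_insert, sum_insert notMem_Iio_self, sum_insert notMem_Iio_self] at h
    exact lt_of_le_of_ne (by omega) (Ne.symm ha_min.1)
  have hexists_lt : ∃ i, μ i < ν i := by
    by_contra! hle
    exact (sum_lt_sum (fun i _ => hle i) ⟨a, mem_univ a, hνa⟩).ne' hsum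
  obtain ⟨b, hb_min⟩ := exists_minimal_of_wellFoundedLT _ hexists_lt
  have hμνb : μ b < ν b := hb_min.1
  have hle_lt_b : ∀ i < b, ν i ≤ μ i := fun i hi => not_lt.1 fun h => hb_min.not_lt h hi
  have hab : a < b := by
    refine lt_of_not_ge fun hba => ?_
    rcases hba.lt_or_eq with hba | rfl
    · exact absurd (heq_lt_a b hba) hμνb.ne
    · exact absurd hνa (not_lt.2 hμνb.le)
  have hgap : μ b + 2 ≤ μ a := by
    have := hν hab.le
    omega
  refine ⟨a, b, hab, hgap, fun j => ?_⟩
  have hmove := sum_Iic_moveBox_add hab (show 0 < μ a by omega) j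
  split_ifs at hmove with hj
  · have hlt : ∑ i ∈ Iic j, ν i < ∑ i ∈ Iic j, μ i :=
      sum_lt_sum (fun i hi => hle_lt_b i ((mem_Iic.1 hi).trans_lt hj.2))
        ⟨a, mem_Iic.2 hj.1, hνa⟩
    omega
  · exact (hdom j).trans_eq (by omega)

end Dominance

def MConcave {M : Type*} [Mul M] [LE M] (n : ℕ) (f : ℕ → M) : Prop :=
  ∀ i j : ℕ, 0 < i → i ≤ j → j < n → f (i - 1) * f (j + 1) ≤ f i * f j

theorem MConcave.mul_le_mul {M : Type*} [CommMagma M] [LE M] {n : ℕ} {f : ℕ → M}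
    (hconc : MConcave n f) {k l : ℕ} (hkl : k + 2 ≤ l) (hl : l ≤ n) :
    f l * f k ≤ f (l - 1) * f (k + 1) := by
  have h := hconc (k + 1) (l - 1) k.succ_pos (by omega) (by omega)
  rwa [Nat.add_sub_cancel, Nat.sub_add_cancel (by omega), mul_comm, mul_comm (f (k + 1))] at h

theorem prodTuple_le_prodTuple_moveBox {M : Type*} [CommSemigroup M] [Preorder M]
    [MulLeftMono M] {n : ℕ} {f : ℕ → M} (hconc : MConcave n f)
    {m : ℕ} {μ : Fin (m + 1) → ℕ} {a b : Fin (m + 1)} (hab : a ≠ b) (hgap : μ b + 2 ≤ μ a)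
    (hμa : μ a ≤ n) :
    prodTuple (fun i => f (μ i)) ≤ prodTuple (fun i => f (moveBox μ a b i)) := by
  refine prodTuple_le_prodTuple_of_mul_le hab
    (fun i hia hib => by rw [moveBox_apply_of_ne hia hib]) ?_
  rw [moveBox_apply_left hab, moveBox_apply_right]
  exact hconc.mul_le_mul hgap hμa

theorem prodTuple_le_prodTuple_of_dominates {M : Type*} [CommSemigroup M] [Preorder M]
    [MulLeftMono M] {n : ℕ} {f : ℕ → M} (hconc : MConcave n f)
    {m : ℕ} {μ ν : Fin (m + 1) → ℕ} (hν : Antitone ν) (hμn : ∀ i, μ i ≤ n)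
    (hsum : ∑ i, μ i = ∑ i, ν i) (hdom : Dominates μ ν) :
    prodTuple (fun i => f (μ i)) ≤ prodTuple (fun i => f (ν i)) := by
  induction hk : ∑ j, ∑ i ∈ Iic j, μ i using Nat.strong_induction_on generalizing μ with
  | _ k ih =>
  by_cases hμν : μ = ν
  · rw [hμν]
  obtain ⟨a, b, hab, hgap, hdom'⟩ := hdom.exists_moveBox hν hsum hμν
  have hμa : 0 < μ a := by omega
  have hbound : ∀ i, moveBox μ a b i ≤ n := fun i => by
    have := hμn a
    by_cases hia : i = a
    · rw [hia, moveBox_apply_left hab.ne]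
      omega
    by_cases hib : i = b
    · rw [hib, moveBox_apply_right]
      omega
    · rw [moveBox_apply_of_ne hia hib]
      exact hμn i
  calc prodTuple (fun i => f (μ i))
      ≤ prodTuple (fun i => f (moveBox μ a b i)) :=
        prodTuple_le_prodTuple_moveBox hconc hab.ne hgap (hμn a)
    _ ≤ prodTuple (fun i => f (ν i)) :=
        ih _ (hk ▸ sum_sum_Iic_moveBox_lt hab hμa) hbound
          ((sum_moveBox hab.ne hμa).trans hsum) hdom' rfl

theorem stmt_9_general {M : Type*} [CommSemigroup M] [Preorder M]
    (hcompat : ∀ a b c d : M, a ≤ b → c ≤ d → a * c ≤ b * d)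
    (n : ℕ) (f : ℕ → M)
    (hconc : ∀ i j : ℕ, 0 < i → i ≤ j → j < n → f (i - 1) * f (j + 1) ≤ f i * f j)
    (m : ℕ) (μ ν : Fin (m + 1) → ℕ)
    (hν : Antitone ν)
    (hμn : ∀ i, μ i ≤ n)
    (hsum : ∑ i, μ i = ∑ i, ν i)
    (hdom : ∀ j : Fin (m + 1), ∑ i ∈ Finset.Iic j, ν i ≤ ∑ i ∈ Finset.Iic j, μ i) :
    prodTuple (fun i => f (μ i)) ≤ prodTuple (fun i => f (ν i)) := by
  have : MulLeftMono M := ⟨fun c _ _ h => hcompat c c _ _ le_rfl h⟩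
  exact prodTuple_le_prodTuple_of_dominates hconc hν hμn hsum hdom

/-- Lemma `l.Li`: let `M` be a commutative monoid with a
multiplication-compatible preorder and `f₀,…,f_n` an `M`-concave sequence. If
`μ = (μ₁,…,μ_m)` and `ν = (ν₁,…,ν_m)` are partitions with entries `≤ n`, `|μ| = |ν|`,
and `μ ≥ ν` in dominance order, then `f_{ν₁} ⋯ f_{ν_m} ≥ f_{μ₁} ⋯ f_{μ_m}`. -/
theorem stmt_9 {M : Type*} [CommSemigroup M] [Preorder M]
    (hcompat : ∀ a b c d : M, a ≤ b → c ≤ d → a * c ≤ b * d)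
    (n : ℕ) (f : ℕ → M)
    (hconc : ∀ i j : ℕ, 0 < i → i ≤ j → j < n → f (i - 1) * f (j + 1) ≤ f i * f j)
    (m : ℕ) (μ ν : Fin (m + 1) → ℕ)
    (hμ : Antitone μ) (hν : Antitone ν)
    (hμn : ∀ i, μ i ≤ n) (hνn : ∀ i, ν i ≤ n)
    (hsum : ∑ i, μ i = ∑ i, ν i)
    (hdom : ∀ j : Fin (m + 1), ∑ i ∈ Finset.Iic j, ν i ≤ ∑ i ∈ Finset.Iic j, μ i) :
    prodTuple (fun i => f (μ i)) ≤ prodTuple (fun i => f (ν i)) :=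
  stmt_9_general hcompat n f hconc m μ ν hν hμn hsum hdom
end

section
/- Let λ be a partition with λ₁ ≤ e and let s_λ(x₁,…,x_e) be the Schur polynomial. For each i ≥ 0, the derived Schur polynomial s_λ^{[1]} satisfies the explicit formula s_λ^{[1]}(x₁,…,x_e) = ∑_μ (e − λ_i + i) s_μ(x₁,…,x_e), where μ ranges over partitions whose Young diagram is obtained from that of λ by removing one box, and for each such μ, i is the (unique) row index with μ_i = λ_i − 1. -/
/-!
Taking the coefficient of `t` in `s(x₁+t, …, x_e+t)` is a derivation, so on the Jacobi–Trudi
determinant `s_λ = det (c_{λ_r + j - r})` it differentiates one row at a time, and on entries it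
acts by `c_k ↦ (e - k + 1) c_{k-1}`. For `k = λ_r + j - r` split `e - k + 1 = (e - λ_r + r + 1) - j`.
The first part lowers row `r` of `λ` by one: this is `s_μ` if the box is removable, and otherwise
a determinant with two equal rows or a zero row. The part `-j c_{k-1}` replaces row `r` by a
multiple of its own shift by one column, and these terms cancel in the sum over `r` since
`adj A * A = det A • 1`.
-/

open MvPolynomial

/-- Elementary symmetric polynomial in `e` variables, indexed by an integer, with the
convention that it vanishes for negative indices (and for indices `> e`). -/
noncomputable def elemInt (e : ℕ) (k : ℤ) : MvPolynomial (Fin e) ℝ :=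
  if 0 ≤ k then MvPolynomial.esymm (Fin e) ℝ k.toNat else 0

/-- The Schur polynomial `s_λ = det (c_{λ_i + j - i})_{1 ≤ i,j ≤ N}` in `e` variables. -/
noncomputable def schur (e N : ℕ) (lam : Fin N → ℕ) : MvPolynomial (Fin e) ℝ :=
  Matrix.det (Matrix.of fun i j : Fin N =>
    elemInt e ((lam i : ℤ) + (j : ℤ) - (i : ℤ)))

/-- The substitution `xᵢ ↦ xᵢ + t`, valued in polynomials in `t` over `ℝ[x₁,…,x_e]`. -/
noncomputable def shiftMap (e : ℕ) :
    MvPolynomial (Fin e) ℝ →ₐ[ℝ] Polynomial (MvPolynomial (Fin e) ℝ) :=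
  MvPolynomial.aeval fun i => Polynomial.C (MvPolynomial.X i) + Polynomial.X

/-- The derived polynomial `s^{[i]}`: the coefficient of `tⁱ` in `s(x₁+t, …, x_e+t)`. -/
noncomputable def derPoly (e : ℕ) (i : ℕ) (s : MvPolynomial (Fin e) ℝ) :
    MvPolynomial (Fin e) ℝ :=
  ((shiftMap e) s).coeff i

namespace Polynomial

variable {R : Type*} [CommSemiring R]

theorem coeff_one_eq_eval_derivative (p : R[X]) : p.coeff 1 = (derivative p).eval 0 := by
  rw [← coeff_zero_eq_eval_zero, coeff_derivative]
  simp

theorem coeff_one_prod {ι : Type*} [DecidableEq ι] (s : Finset ι) (f : ι → R[X]) :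
    (∏ i ∈ s, f i).coeff 1 = ∑ i ∈ s, (f i).coeff 1 * ∏ j ∈ s.erase i, (f j).coeff 0 := by
  simp only [coeff_one_eq_eval_derivative, derivative_prod_finset, eval_finsetSum, eval_mul,
    eval_prod, coeff_zero_eq_eval_zero, mul_comm]

end Polynomial

namespace Matrix

variable {n R : Type*} [Fintype n] [DecidableEq n] [CommRing R]

theorem det_updateRow_eq_sum_mul_adjugate (A : Matrix n n R) (i : n) (v : n → R) :
    (A.updateRow i v).det = ∑ j, v j * A.adjugate j i := by
  rw [← cramer_transpose_apply, cramer_eq_adjugate_mulVec, ← adjugate_transpose, mulVec,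
    dotProduct]
  simp only [transpose_apply, mul_comm]

theorem sum_det_updateRow_mul_eq_zero (A : Matrix n n R) (d : n → R) (g : n → n)
    (hg : ∀ j, g j = j → d j = 0) :
    ∑ r, (A.updateRow r fun j => d j * A r (g j)).det = 0 := by
  simp_rw [det_updateRow_eq_sum_mul_adjugate]
  rw [Finset.sum_comm]
  refine Finset.sum_eq_zero fun j _ => ?_
  have hcol : ∑ r, A.adjugate j r * A r (g j) = A.det * (1 : Matrix n n R) j (g j) := by
    rw [← mul_apply, adjugate_mul, smul_apply, smul_eq_mul]
  calc ∑ r, d j * A r (g j) * A.adjugate j r = d j * (A.det * (1 : Matrix n n R) j (g j)) := by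
        rw [← hcol, Finset.mul_sum]
        exact Finset.sum_congr rfl fun r _ => by ring
    _ = 0 := by
        by_cases h : g j = j
        · rw [hg j h, zero_mul]
        · rw [one_apply_ne (Ne.symm h), mul_zero, mul_zero]

theorem coeff_one_det (P : Matrix n n (Polynomial R)) :
    P.det.coeff 1 = ∑ r, ((P.map (·.coeff 0)).updateRow r fun j => (P r j).coeff 1).det := by
  simp only [det_apply', Polynomial.finsetSum_coeff, Polynomial.coeff_intCast_mul,
    Polynomial.coeff_one_prod, Finset.mul_sum]
  rw [Finset.sum_comm (s := Finset.univ (α := n))]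
  refine Finset.sum_congr rfl fun σ _ => ?_
  refine (Equiv.sum_comp σ _).symm.trans (Finset.sum_congr rfl fun i _ => ?_) |>.symm
  rw [← Finset.mul_prod_erase Finset.univ _ (Finset.mem_univ i), updateRow_self]
  congr 2
  refine Finset.prod_congr rfl fun k hk => ?_
  rw [updateRow_ne (σ.injective.ne (Finset.ne_of_mem_erase hk)), map_apply]

end Matrix

theorem Finset.sum_powersetCard_succ_sum_erase {α M : Type*} [DecidableEq α] [AddCommMonoid M]
    (s : Finset α) (n : ℕ) (f : Finset α → M) :
    ∑ S ∈ s.powersetCard (n + 1), ∑ i ∈ S, f (S.erase i) =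
      ∑ T ∈ s.powersetCard n, (s \ T).card • f T := by
  simp only [← Finset.sum_const]
  rw [Finset.sum_sigma', Finset.sum_sigma']
  refine Finset.sum_nbij' (fun p => ⟨p.1.erase p.2, p.2⟩) (fun q => ⟨insert q.2 q.1, q.2⟩)
    ?_ ?_ ?_ ?_ fun _ _ => rfl
  all_goals rintro ⟨S, i⟩ h
  all_goals simp only [Finset.mem_sigma, Finset.mem_powersetCard, Finset.mem_sdiff] at h ⊢
  · exact ⟨⟨(Finset.erase_subset i S).trans h.1.1,
      by rw [Finset.card_erase_of_mem h.2, h.1.2, Nat.add_sub_cancel]⟩,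
      h.1.1 h.2, Finset.notMem_erase i S⟩
  · exact ⟨⟨Finset.insert_subset h.2.1 h.1.1,
      by rw [Finset.card_insert_of_notMem h.2.2, h.1.2]⟩, Finset.mem_insert_self i S⟩
  · rw [Finset.insert_erase h.2]
  · rw [Finset.erase_insert h.2.2]

theorem shiftMap_coeff_zero (e : ℕ) (p : MvPolynomial (Fin e) ℝ) :
    ((shiftMap e) p).coeff 0 = p := by
  have hcomp : ((Polynomial.aeval (0 : MvPolynomial (Fin e) ℝ)).restrictScalars ℝ).comp
      (shiftMap e) = AlgHom.id ℝ _ :=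
    algHom_ext fun i => by simp [shiftMap]
  simpa [Polynomial.coeff_zero_eq_eval_zero] using DFunLike.congr_fun hcomp p

theorem derPoly_one_esymm_succ (e n : ℕ) :
    derPoly e 1 (esymm (Fin e) ℝ (n + 1)) = (e - n) • esymm (Fin e) ℝ n := by
  have hmonomial : ∀ S : Finset (Fin e), ((shiftMap e) (∏ i ∈ S, X i)).coeff 1 =
      ∑ i ∈ S, ∏ j ∈ S.erase i, (X j : MvPolynomial (Fin e) ℝ) := by
    intro S
    rw [map_prod, Polynomial.coeff_one_prod]
    refine Finset.sum_congr rfl fun i _ => ?_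
    simp [shiftMap]
  simp only [derPoly, esymm, map_sum, Polynomial.finsetSum_coeff, hmonomial]
  refine (Finset.sum_powersetCard_succ_sum_erase _ _ fun T => ∏ j ∈ T, X j).trans ?_
  rw [Finset.smul_sum]
  refine Finset.sum_congr rfl fun T hT => ?_
  rw [Finset.card_sdiff_of_subset (Finset.subset_univ T), (Finset.mem_powersetCard_univ.1 hT),
    Finset.card_univ, Fintype.card_fin]

theorem esymm_eq_zero_of_card_lt {σ R : Type*} [Fintype σ] [CommSemiring R] {n : ℕ}
    (h : Fintype.card σ < n) : esymm σ R n = 0 := by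
  rw [esymm, Finset.powersetCard_eq_empty.2 (by rwa [Finset.card_univ]), Finset.sum_empty]

theorem derPoly_one_elemInt (e : ℕ) (k : ℤ) :
    derPoly e 1 (elemInt e k) = C ((e : ℝ) - k + 1) * elemInt e (k - 1) := by
  obtain hk | rfl | hk := lt_trichotomy k 0
  · rw [elemInt, elemInt, if_neg hk.not_ge, if_neg (by omega)]
    simp [derPoly]
  · simp [elemInt, derPoly, shiftMap, Polynomial.coeff_one]
  obtain ⟨n, rfl⟩ : ∃ n : ℕ, k = n + 1 := ⟨k.toNat - 1, by omega⟩
  simp only [elemInt, show (0 : ℤ) ≤ n + 1 by omega, Nat.cast_nonneg, if_true,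
    show ((n : ℤ) + 1).toNat = n + 1 by omega, add_sub_cancel_right, Int.toNat_natCast,
    derPoly_one_esymm_succ]
  rcases le_or_gt n e with hn | hn
  · rw [← Nat.cast_smul_eq_nsmul ℝ, smul_eq_C_mul, Nat.cast_sub hn]
    push_cast
    ring_nf
  · simp [esymm_eq_zero_of_card_lt (R := ℝ) (show Fintype.card (Fin e) < n by simpa)]

def Fin.predOrZero {N : ℕ} (j : Fin N) : Fin N :=
  ⟨j - 1, (Nat.sub_le _ _).trans_lt j.isLt⟩

theorem Fin.val_predOrZero {N : ℕ} (j : Fin N) : (j.predOrZero : ℕ) = j - 1 :=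
  rfl

theorem derPoly_one_det {n : Type*} [Fintype n] [DecidableEq n] {e : ℕ}
    (A : Matrix n n (MvPolynomial (Fin e) ℝ)) :
    derPoly e 1 A.det = ∑ r, (A.updateRow r fun j => derPoly e 1 (A r j)).det := by
  have hA : ((shiftMap e).mapMatrix A).map (·.coeff 0) = A :=
    Matrix.ext fun i j => shiftMap_coeff_zero e (A i j)
  rw [derPoly, AlgHom.map_det, Matrix.coeff_one_det, hA]
  rfl

/-- The Jacobi–Trudi matrix `(c_{a_i + j - i})_{i,j}`; integer row data `a` let us lower a row
of a partition by one without truncation. -/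
noncomputable def jacobiTrudi (e N : ℕ) (a : Fin N → ℤ) :
    Matrix (Fin N) (Fin N) (MvPolynomial (Fin e) ℝ) :=
  Matrix.of fun i j => elemInt e (a i + j - i)

section JacobiTrudi

variable {e N : ℕ}

theorem schur_eq_det_jacobiTrudi (lam : Fin N → ℕ) :
    schur e N lam = (jacobiTrudi e N fun i => (lam i : ℤ)).det :=
  rfl

theorem updateRow_jacobiTrudi_update (a : Fin N → ℤ) (r : Fin N) (x : ℤ) :
    (jacobiTrudi e N a).updateRow r (jacobiTrudi e N (Function.update a r x) r) =
      jacobiTrudi e N (Function.update a r x) := by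
  ext i j
  rcases eq_or_ne i r with rfl | hi
  · rw [Matrix.updateRow_self]
  · rw [Matrix.updateRow_ne hi, jacobiTrudi, jacobiTrudi, Matrix.of_apply, Matrix.of_apply,
      Function.update_of_ne hi]

theorem det_jacobiTrudi_eq_zero_of_sub_eq (a : Fin N → ℤ) {i i' : Fin N} (hne : i ≠ i')
    (h : a i - i = a i' - i') : (jacobiTrudi e N a).det = 0 :=
  Matrix.det_zero_of_row_eq hne <| funext fun j => by
    simp only [jacobiTrudi, Matrix.of_apply]
    congr 1
    omega

theorem det_jacobiTrudi_eq_zero_of_add_le (a : Fin N → ℤ) (i : Fin N) (h : a i + N ≤ i) :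
    (jacobiTrudi e N a).det = 0 :=
  Matrix.det_eq_zero_of_row_eq_zero i fun j => by
    rw [jacobiTrudi, Matrix.of_apply, elemInt, if_neg]
    omega

theorem derPoly_one_jacobiTrudi (a : Fin N → ℤ) (r j : Fin N) :
    derPoly e 1 (jacobiTrudi e N a r j) =
      C ((e : ℝ) - a r + r + 1) * jacobiTrudi e N (Function.update a r (a r - 1)) r j +
        C (-(j : ℝ)) * jacobiTrudi e N a r j.predOrZero := by
  simp only [jacobiTrudi, Matrix.of_apply, Function.update_self, Fin.val_predOrZero,
    derPoly_one_elemInt]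
  have hshift : C (-(j : ℝ)) * elemInt e (a r + ((j - 1 : ℕ) : ℤ) - r) =
      C (-(j : ℝ)) * elemInt e (a r + j - r - 1) := by
    rcases Nat.eq_zero_or_pos j with hj | hj
    · simp [hj]
    · congr 2
      omega
  rw [hshift, show a r - 1 + j - r = a r + j - r - 1 by ring, ← add_mul, ← map_add]
  congr 2
  push_cast
  ring

theorem det_updateRow_derPoly_one_jacobiTrudi (a : Fin N → ℤ) (r : Fin N) :
    ((jacobiTrudi e N a).updateRow r fun j => derPoly e 1 (jacobiTrudi e N a r j)).det =
      C ((e : ℝ) - a r + r + 1) * (jacobiTrudi e N (Function.update a r (a r - 1))).det +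
        ((jacobiTrudi e N a).updateRow r fun j =>
          C (-(j : ℝ)) * jacobiTrudi e N a r j.predOrZero).det := by
  have hrow : (fun j => derPoly e 1 (jacobiTrudi e N a r j)) =
      (C ((e : ℝ) - a r + r + 1) : MvPolynomial (Fin e) ℝ) •
          jacobiTrudi e N (Function.update a r (a r - 1)) r +
        fun j : Fin N =>
          C (-(j : ℝ)) * jacobiTrudi e N a r j.predOrZero :=
    funext fun j => derPoly_one_jacobiTrudi a r j
  rw [hrow, Matrix.det_updateRow_add, Matrix.det_updateRow_smul, updateRow_jacobiTrudi_update]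

theorem det_jacobiTrudi_lowerRow (lam : Fin N → ℕ) (hanti : Antitone lam) (r : Fin N) :
    (jacobiTrudi e N (Function.update (fun i => (lam i : ℤ)) r (lam r - 1))).det =
      if 0 < lam r ∧ ∀ j, r < j → lam j < lam r then
        schur e N (fun j => if j = r then lam r - 1 else lam j) else 0 := by
  split_ifs with hremovable
  · rw [schur_eq_det_jacobiTrudi]
    congr 2
    funext i
    rcases eq_or_ne i r with rfl | hi
    · simp only [Function.update_self, if_true]
      omega
    · simp only [Function.update_of_ne hi, if_neg hi]
  rcases Nat.lt_or_ge ((r : ℕ) + 1) N with hr | hr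
  · set r' : Fin N := ⟨r + 1, hr⟩
    have hlt : r < r' := Fin.lt_def.2 (Nat.lt_succ_self r)
    have hlam : lam r' = lam r := by
      refine le_antisymm (hanti hlt.le) ?_
      rcases Nat.eq_zero_or_pos (lam r) with h0 | h0
      · omega
      obtain ⟨j, hj, hge⟩ : ∃ j, r < j ∧ lam r ≤ lam j := by
        simpa [h0] using hremovable
      exact hge.trans (hanti (Fin.le_def.2 (Nat.succ_le_of_lt (Fin.lt_def.1 hj))))
    refine det_jacobiTrudi_eq_zero_of_sub_eq _ hlt.ne ?_
    simp only [Function.update_self, Function.update_of_ne hlt.ne', hlam]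
    simp [r']
    omega
  · have h0 : lam r = 0 := by
      by_contra h
      exact hremovable ⟨Nat.pos_of_ne_zero h, fun j hj => absurd j.isLt (by omega)⟩
    refine det_jacobiTrudi_eq_zero_of_add_le _ r ?_
    simp only [Function.update_self, h0]
    omega

end JacobiTrudi

/-- Rows are indexed from `0`, so row `i` carries the paper's coefficient `e - λ_i + (i + 1)`. -/
theorem stmt_10_general (e N : ℕ) (lam : Fin N → ℕ) (hanti : Antitone lam) :
    derPoly e 1 (schur e N lam) =
      ∑ i ∈ Finset.univ.filter
          (fun i : Fin N => 0 < lam i ∧ ∀ j : Fin N, i < j → lam j < lam i),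
        MvPolynomial.C ((e : ℝ) - (lam i : ℝ) + ((i : ℕ) + 1 : ℝ)) *
          schur e N (fun j => if j = i then lam i - 1 else lam j) := by
  rw [schur_eq_det_jacobiTrudi, derPoly_one_det]
  simp only [det_updateRow_derPoly_one_jacobiTrudi, Finset.sum_add_distrib]
  rw [Matrix.sum_det_updateRow_mul_eq_zero, add_zero, Finset.sum_filter]
  · refine Finset.sum_congr rfl fun r _ => ?_
    rw [det_jacobiTrudi_lowerRow lam hanti r, mul_ite, mul_zero]
    congr 3
    push_cast
    ring
  · intro j hj
    have hj0 : (j : ℕ) - 1 = j := congrArg Fin.val hj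
    simp only [show (j : ℕ) = 0 by omega, Nat.cast_zero, neg_zero, map_zero]

/-- for a partition `λ` with `λ₁ ≤ e`, the derived Schur polynomial
satisfies `s_λ^{[1]} = ∑_μ (e - λ_i + i) s_μ`, where `μ` runs over partitions obtained from
`λ` by removing one box, removed from row `i` (1-based; here the row index `i : Fin N` is
0-based, so the coefficient is `e - λ_i + (i + 1)`, and removability of a box in row `i`
means `λ_i > 0` and `λ_j < λ_i` for all rows `j > i`). -/
theorem stmt_10 (e N : ℕ) (lam : Fin N → ℕ) (hanti : Antitone lam)
    (hle : ∀ i, lam i ≤ e) :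
    derPoly e 1 (schur e N lam) =
      ∑ i ∈ Finset.univ.filter
          (fun i : Fin N => 0 < lam i ∧ ∀ j : Fin N, i < j → lam j < lam i),
        MvPolynomial.C ((e : ℝ) - (lam i : ℝ) + ((i : ℕ) + 1 : ℝ)) *
          schur e N (fun j => if j = i then lam i - 1 else lam j) :=
  stmt_10_general e N lam hanti
end

section
/- Let f(x,y) = x³ + 2x²y + 4xy² + 8y³. Then f is dually Lorentzian, but the polynomial (f^{[1]})² − f^{[0]} f^{[2]} = 14x⁴ + 64x³y + 312x²y² + 448xy³ + 512y⁴ is not dually Lorentzian. -/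
/-!
For a binary form `∑ cᵢ xⁱ y^{d-i}` the normalization `N` cancels the binomial coefficients:
the `a`-th normalized coefficient of the dual is `c_{d-a} / d!`. Hence a binary form is dually
Lorentzian iff its own coefficients are nonnegative and log-concave without internal zeroes.
The coefficients `8, 4, 2, 1` of `f` are geometric, so log-concave with equality, whereas for
the quartic `14 · 312 > 64²`.
-/

open MvPolynomial

/-- The substitution `(x,y) ↦ (x+t, y+t)`, valued in polynomials in `t`. -/
noncomputable def shiftMap2 :
    MvPolynomial (Fin 2) ℝ →ₐ[ℝ] Polynomial (MvPolynomial (Fin 2) ℝ) :=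
  MvPolynomial.aeval fun i => Polynomial.C (MvPolynomial.X i) + Polynomial.X

/-- The derived polynomial `f^{[i]}`: the coefficient of `tⁱ` in `f(x+t, y+t)`. -/
noncomputable def der2 (i : ℕ) (f : MvPolynomial (Fin 2) ℝ) : MvPolynomial (Fin 2) ℝ :=
  (shiftMap2 f).coeff i

/-- A sequence `c₀,…,c_d` is log-concave with no internal zeroes. -/
def LogConcaveNoIZ (d : ℕ) (c : ℕ → ℝ) : Prop :=
  (∀ i : ℕ, 0 < i → i < d → c (i - 1) * c (i + 1) ≤ c i ^ 2) ∧
  ¬ ∃ i j k : ℕ, i < j ∧ j < k ∧ k ≤ d ∧ c i ≠ 0 ∧ c j = 0 ∧ c k ≠ 0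

/-- A bivariate homogeneous polynomial of degree `d` with coefficient sequence `c`
(`cᵢ` the coefficient of `xⁱ y^{d-i}`) is Lorentzian iff all `cᵢ ≥ 0` and the normalized
coefficients `cᵢ / C(d,i)` form a log-concave sequence with no internal zeroes. -/
def IsLorentzianCoeff (d : ℕ) (c : ℕ → ℝ) : Prop :=
  (∀ i, 0 ≤ c i) ∧ LogConcaveNoIZ d fun i => c i / (d.choose i : ℝ)

/-- The coefficient of `xⁱ y^{d-i}` in a bivariate polynomial. -/
noncomputable def coeffSeq (d : ℕ) (f : MvPolynomial (Fin 2) ℝ) (i : ℕ) : ℝ :=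
  MvPolynomial.coeff (Finsupp.single 0 i + Finsupp.single 1 (d - i)) f

/-- The coefficient sequence of the dual `f^∨(x,y) = N(x^d y^d f(1/x, 1/y))` of a
homogeneous bivariate polynomial of degree `d` (taking `(κ₁,κ₂) = (d,d)`), where the
normalization operator `N` sends `x^a y^b` to `x^a y^b / (a! b!)`; `f^∨` is again
homogeneous of degree `d`, with coefficient of `x^a y^{d-a}` equal to
`c_{d-a} / (a! (d-a)!)`. -/
noncomputable def dualCoeff (d : ℕ) (f : MvPolynomial (Fin 2) ℝ) (a : ℕ) : ℝ :=
  coeffSeq d f (d - a) / ((a.factorial : ℝ) * ((d - a).factorial : ℝ))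

/-- `f` is dually Lorentzian: it is homogeneous of degree `d` and its dual is Lorentzian. -/
def IsDuallyLorentzianBiv (d : ℕ) (f : MvPolynomial (Fin 2) ℝ) : Prop :=
  f.IsHomogeneous d ∧ IsLorentzianCoeff d (dualCoeff d f)

noncomputable def binaryForm (d : ℕ) (c : ℕ → ℝ) : MvPolynomial (Fin 2) ℝ :=
  ∑ i ∈ Finset.range (d + 1), C (c i) * X 0 ^ i * X 1 ^ (d - i)

lemma C_mul_X_pow_mul_X_pow (a b : ℕ) (r : ℝ) :
    C r * X 0 ^ a * X 1 ^ b =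
      monomial (Finsupp.single (0 : Fin 2) a + Finsupp.single 1 b) r := by
  rw [X_pow_eq_monomial, X_pow_eq_monomial, mul_assoc, monomial_mul, one_mul,
    C_mul_monomial, mul_one]

lemma single_zero_add_single_one_inj {a b c d : ℕ} :
    Finsupp.single (0 : Fin 2) a + Finsupp.single 1 b =
      Finsupp.single 0 c + Finsupp.single 1 d ↔ a = c ∧ b = d := by
  constructor
  · intro h
    have h0 := DFunLike.congr_fun h 0
    have h1 := DFunLike.congr_fun h 1
    simp only [Finsupp.add_apply, Finsupp.single_apply] at h0 h1
    simpa using And.intro h0 h1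
  · rintro ⟨rfl, rfl⟩
    rfl

lemma isHomogeneous_binaryForm (d : ℕ) (c : ℕ → ℝ) : (binaryForm d c).IsHomogeneous d := by
  refine IsHomogeneous.sum _ _ _ fun i hi => ?_
  rw [C_mul_X_pow_mul_X_pow]
  apply isHomogeneous_monomial
  rw [map_add, Finsupp.degree_single, Finsupp.degree_single]
  have := Finset.mem_range.1 hi
  omega

lemma coeffSeq_binaryForm {d i : ℕ} (c : ℕ → ℝ) (hi : i ≤ d) :
    coeffSeq d (binaryForm d c) i = c i := by
  rw [coeffSeq, binaryForm, coeff_sum, Finset.sum_eq_single i]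
  · rw [C_mul_X_pow_mul_X_pow, coeff_monomial, if_pos rfl]
  · intro j _ hji
    rw [C_mul_X_pow_mul_X_pow, coeff_monomial, if_neg]
    exact fun h => hji (single_zero_add_single_one_inj.1 h).1
  · intro h
    exact absurd (Finset.mem_range.2 (Nat.lt_succ_of_le hi)) h

lemma logConcaveNoIZ_congr {d : ℕ} {c c' : ℕ → ℝ} {r : ℝ} (hr : 0 < r)
    (h : ∀ i ≤ d, c' i = r * c i) : LogConcaveNoIZ d c' ↔ LogConcaveNoIZ d c := by
  have hzero : ∀ i ≤ d, c' i = 0 ↔ c i = 0 := fun i hi => by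
    rw [h i hi, mul_eq_zero, or_iff_right hr.ne']
  refine and_congr ?_ (not_congr ?_)
  · refine forall_congr' fun i => imp_congr_right fun _ => imp_congr_right fun hid => ?_
    rw [h _ (by omega), h _ (by omega), h _ hid.le, mul_mul_mul_comm, mul_pow, ← sq]
    exact mul_le_mul_iff_right₀ (by positivity)
  · refine exists₃_congr fun i j k => ⟨fun ⟨hij, hjk, hk, hi, hj, hk'⟩ => ?_,
      fun ⟨hij, hjk, hk, hi, hj, hk'⟩ => ?_⟩
    · exact ⟨hij, hjk, hk, by rwa [Ne, ← hzero i (by omega)], (hzero j (by omega)).1 hj,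
        by rwa [Ne, ← hzero k hk]⟩
    · exact ⟨hij, hjk, hk, by rwa [Ne, hzero i (by omega)], (hzero j (by omega)).2 hj,
        by rwa [Ne, hzero k hk]⟩

lemma dualCoeff_div_choose {d a : ℕ} (f : MvPolynomial (Fin 2) ℝ) (ha : a ≤ d) :
    dualCoeff d f a / d.choose a = (d.factorial : ℝ)⁻¹ * coeffSeq d f (d - a) := by
  rw [dualCoeff, Nat.cast_choose ℝ ha]
  field_simp

lemma isLorentzianCoeff_dualCoeff_iff (d : ℕ) (f : MvPolynomial (Fin 2) ℝ) :
    IsLorentzianCoeff d (dualCoeff d f) ↔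
      (∀ i ≤ d, 0 ≤ coeffSeq d f i) ∧ LogConcaveNoIZ d fun a => coeffSeq d f (d - a) := by
  refine and_congr ⟨fun h i hi => ?_, fun h a => ?_⟩ (logConcaveNoIZ_congr
    (r := (d.factorial : ℝ)⁻¹) (by positivity) fun a ha => dualCoeff_div_choose f ha)
  · have := h (d - i)
    rw [dualCoeff, Nat.sub_sub_self hi] at this
    simpa using (le_div_iff₀ (by positivity)).1 this
  · exact div_nonneg (h _ (Nat.sub_le d a)) (by positivity)

lemma isDuallyLorentzianBiv_binaryForm_iff (d : ℕ) (c : ℕ → ℝ) :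
    IsDuallyLorentzianBiv d (binaryForm d c) ↔
      (∀ i ≤ d, 0 ≤ c i) ∧ LogConcaveNoIZ d fun a => c (d - a) := by
  rw [IsDuallyLorentzianBiv, isLorentzianCoeff_dualCoeff_iff, and_iff_right (isHomogeneous_binaryForm d c)]
  refine and_congr (forall₂_congr fun i hi => by rw [coeffSeq_binaryForm c hi])
    (logConcaveNoIZ_congr one_pos fun a _ => by rw [one_mul, coeffSeq_binaryForm c (Nat.sub_le d a)])

noncomputable def cubicExample : MvPolynomial (Fin 2) ℝ :=
  X 0 ^ 3 + C 2 * X 0 ^ 2 * X 1 + C 4 * X 0 * X 1 ^ 2 + C 8 * X 1 ^ 3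

lemma shiftMap2_cubicExample : shiftMap2 cubicExample = Polynomial.C cubicExample
    + Polynomial.C (C 5 * X 0 ^ 2 + C 12 * X 0 * X 1 + C 28 * X 1 ^ 2) * Polynomial.X
    + Polynomial.C (C 11 * X 0 + C 34 * X 1) * Polynomial.X ^ 2
    + Polynomial.C (C 15) * Polynomial.X ^ 3 := by
  simp only [shiftMap2, cubicExample, map_add, map_mul, map_pow, aeval_X, map_ofNat]
  ring

lemma der2_cubicExample :
    der2 0 cubicExample = cubicExample ∧
    der2 1 cubicExample = C 5 * X 0 ^ 2 + C 12 * X 0 * X 1 + C 28 * X 1 ^ 2 ∧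
    der2 2 cubicExample = C 11 * X 0 + C 34 * X 1 := by
  simp only [der2, shiftMap2_cubicExample, Polynomial.coeff_add, Polynomial.coeff_C_mul,
    Polynomial.coeff_X_pow, Polynomial.coeff_X, Polynomial.coeff_C]
  norm_num

lemma der2_sq_sub_mul_cubicExample :
    der2 1 cubicExample ^ 2 - der2 0 cubicExample * der2 2 cubicExample =
      C 14 * X 0 ^ 4 + C 64 * X 0 ^ 3 * X 1 + C 312 * X 0 ^ 2 * X 1 ^ 2 +
        C 448 * X 0 * X 1 ^ 3 + C 512 * X 1 ^ 4 := by
  obtain ⟨h0, h1, h2⟩ := der2_cubicExample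
  rw [h0, h1, h2, cubicExample]
  simp only [map_ofNat]
  ring

lemma cubicExample_eq_binaryForm : cubicExample = binaryForm 3 fun i => 2 ^ (3 - i) := by
  simp only [cubicExample, binaryForm, Finset.sum_range_succ, Finset.sum_range_zero]
  norm_num [map_ofNat]
  ring

lemma quartic_eq_binaryForm :
    (C 14 * X 0 ^ 4 + C 64 * X 0 ^ 3 * X 1 + C 312 * X 0 ^ 2 * X 1 ^ 2 +
        C 448 * X 0 * X 1 ^ 3 + C 512 * X 1 ^ 4 : MvPolynomial (Fin 2) ℝ) =
      binaryForm 4 ([512, 448, 312, 64, 14].getD · 0) := by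
  simp only [binaryForm, Finset.sum_range_succ, Finset.sum_range_zero]
  norm_num [map_ofNat]
  ring

lemma isDuallyLorentzianBiv_cubicExample : IsDuallyLorentzianBiv 3 cubicExample := by
  rw [cubicExample_eq_binaryForm, isDuallyLorentzianBiv_binaryForm_iff]
  refine ⟨fun i _ => by positivity, fun i hi hi' => ?_, ?_⟩
  · interval_cases i <;> norm_num
  · rintro ⟨i, j, k, -, -, -, -, hj, -⟩
    exact pow_ne_zero _ two_ne_zero hj

lemma not_isDuallyLorentzianBiv_quartic :
    ¬ IsDuallyLorentzianBiv 4 (C 14 * X 0 ^ 4 + C 64 * X 0 ^ 3 * X 1 +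
      C 312 * X 0 ^ 2 * X 1 ^ 2 + C 448 * X 0 * X 1 ^ 3 + C 512 * X 1 ^ 4) := by
  rw [quartic_eq_binaryForm, isDuallyLorentzianBiv_binaryForm_iff]
  rintro ⟨-, hlc, -⟩
  have := hlc 1 one_pos (by norm_num)
  norm_num at this

/-- `f = x³ + 2x²y + 4xy² + 8y³` is dually Lorentzian, but
`(f^{[1]})² - f^{[0]} f^{[2]} = 14x⁴ + 64x³y + 312x²y² + 448xy³ + 512y⁴` is not
dually Lorentzian. -/
theorem stmt_16 :
    let x : MvPolynomial (Fin 2) ℝ := X 0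
    let y : MvPolynomial (Fin 2) ℝ := X 1
    let f := x ^ 3 + C 2 * x ^ 2 * y + C 4 * x * y ^ 2 + C 8 * y ^ 3
    IsDuallyLorentzianBiv 3 f ∧
    (der2 1 f) ^ 2 - der2 0 f * der2 2 f =
      C 14 * x ^ 4 + C 64 * x ^ 3 * y + C 312 * x ^ 2 * y ^ 2 +
        C 448 * x * y ^ 3 + C 512 * y ^ 4 ∧
    ¬ IsDuallyLorentzianBiv 4 ((der2 1 f) ^ 2 - der2 0 f * der2 2 f) := by
  intro x y f
  have hf : f = cubicExample := rfl
  rw [hf, der2_sq_sub_mul_cubicExample]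
  exact ⟨isDuallyLorentzianBiv_cubicExample, rfl, not_isDuallyLorentzianBiv_quartic⟩
end

section
/- For f = x² + 3xy + 9y², the 3×3 determinant det [[f^{[1]}(1,0), f^{[2]}(1,0), 0], [f^{[0]}(1,0), f^{[1]}(1,0), f^{[2]}(1,0)], [0, f^{[0]}(1,0), f^{[1]}(1,0)]] equals −5; in particular the sequence (f^{[0]}(1,0), f^{[1]}(1,0), f^{[2]}(1,0)) = (1, 5, 13) is not a Pólya frequency sequence. -/
/-!
Evaluating `f^{[i]}` at a point `v` is the same as taking the `tⁱ`-coefficient of the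
one-variable polynomial `f(v₁ + t, v₂ + t)`; at `v = (1, 0)` this polynomial is
`(1 + t)² + 3(1 + t)t + 9t² = 1 + 5t + 13t²`. The displayed determinant is the minor of the
Toeplitz matrix on rows `0, 1, 2` and columns `1, 2, 3`, and it equals
`a₁³ - 2a₀a₁a₂ = 125 - 130 = -5 < 0`.
-/

open MvPolynomial

/-- The extension by zero of a finite sequence `a₀,…,a_n` to all integers. -/
noncomputable def extSeq (n : ℕ) (a : ℕ → ℝ) (k : ℤ) : ℝ :=
  if 0 ≤ k ∧ k ≤ (n : ℤ) then a k.toNat else 0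

/-- `a₀,…,a_n` is a Pólya frequency sequence: all minors of the Toeplitz matrix
`(a_{j-i})` are nonnegative. -/
def IsPolyaFrequency (n : ℕ) (a : ℕ → ℝ) : Prop :=
  ∀ (p : ℕ) (r c : Fin p → ℕ), StrictMono r → StrictMono c →
    0 ≤ Matrix.det (Matrix.of fun i j : Fin p => extSeq n a ((c j : ℤ) - (r i : ℤ)))

theorem eval_der2 (v : Fin 2 → ℝ) (i : ℕ) (f : MvPolynomial (Fin 2) ℝ) :
    eval v (der2 i f) = (aeval (fun j => Polynomial.C (v j) + Polynomial.X) f).coeff i := by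
  have hcomp : (Polynomial.mapAlgHom (aeval v)).comp shiftMap2 =
      aeval fun j => Polynomial.C (v j) + Polynomial.X := by
    rw [shiftMap2, MvPolynomial.comp_aeval]
    simp
  rw [← hcomp, der2, AlgHom.comp_apply]
  exact (Polynomial.coeff_map _ _).symm

theorem IsPolyaFrequency.det_toeplitz_three_nonneg {a : ℕ → ℝ} (ha : IsPolyaFrequency 2 a) :
    0 ≤ Matrix.det !![a 1, a 2, 0; a 0, a 1, a 2; 0, a 0, a 1] := by
  have hc : StrictMono fun j : Fin 3 => (j : ℕ) + 1 := fun _ _ h => Nat.add_lt_add_right h 1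
  convert ha 3 (fun i => i) (fun j => j + 1) (fun _ _ h => h) hc using 2
  ext i j
  fin_cases i <;> fin_cases j <;> simp [extSeq]

/-- for `f = x² + 3xy + 9y²`, the displayed `3×3` Toeplitz minor of the
sequence `(f^{[0]}(1,0), f^{[1]}(1,0), f^{[2]}(1,0)) = (1, 5, 13)` equals `-5`; in
particular this sequence is not a Pólya frequency sequence. -/
theorem stmt_17 :
    let f : MvPolynomial (Fin 2) ℝ := X 0 ^ 2 + C 3 * X 0 * X 1 + C 9 * X 1 ^ 2
    let a : ℕ → ℝ := fun i =>
      MvPolynomial.eval (fun j : Fin 2 => if j = 0 then (1 : ℝ) else 0) (der2 i f)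
    a 0 = 1 ∧ a 1 = 5 ∧ a 2 = 13 ∧
    Matrix.det !![a 1, a 2, 0; a 0, a 1, a 2; 0, a 0, a 1] = -5 ∧
    ¬ IsPolyaFrequency 2 a := by
  intro f a
  have hshift :
      aeval (fun j : Fin 2 => Polynomial.C (if j = 0 then (1 : ℝ) else 0) + Polynomial.X) f =
        Polynomial.C 1 + Polynomial.C 5 * Polynomial.X + Polynomial.C 13 * Polynomial.X ^ 2 := by
    simp [f, map_ofNat]
    ring
  have ha (i : ℕ) : a i = (Polynomial.C 1 + Polynomial.C 5 * Polynomial.X +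
      Polynomial.C 13 * Polynomial.X ^ 2 : Polynomial ℝ).coeff i := by
    rw [← hshift]
    exact eval_der2 _ i f
  have h0 : a 0 = 1 := by simp [ha]
  have h1 : a 1 = 5 := by simp [ha, Polynomial.coeff_one]
  have h2 : a 2 = 13 := by simp [ha, Polynomial.coeff_one]
  have hdet : Matrix.det !![a 1, a 2, 0; a 0, a 1, a 2; 0, a 0, a 1] = -5 := by
    rw [Matrix.det_fin_three]
    simp [h0, h1, h2]
    norm_num
  exact ⟨h0, h1, h2, hdet, fun hPF => by linarith [hPF.det_toeplitz_three_nonneg]⟩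
end

section
/- Let m ≥ 1 and let f₀, f₁, f₂, f₃ be the polynomials (4x²y, (x+y)², x+y, 1) in ℝ[x,y]. Then f₁² − f₀f₂ and f₂² − f₁f₃ are monomial-positive (all coefficients nonnegative), but f₁f₂ − f₀f₃ = x³ − x²y + 3xy² + y³ is not monomial-positive. Hence the analogue of the characterization 'log-concave with no internal zeroes implies b_i b_j ≥ b_{i−1} b_{j+1}' fails when nonnegative reals are replaced by monomial-positive polynomials. -/
/-!
The first difference expands to `x⁴ + 2x²y² + 4xy³ + y⁴`, which lies in the subsemiring of
polynomials with nonnegative coefficients since it is built from the variables and positive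
integers by sums and products; the second difference is `0`. The third difference expands to
`x³ - x²y + 3xy² + y³`, whose coefficient at `x²y` is `-1`.
-/

open MvPolynomial

namespace MvPolynomial

variable (σ R : Type*) [CommSemiring R] [PartialOrder R] [IsOrderedRing R]

def monomialPositive : Subsemiring (MvPolynomial σ R) where
  carrier := {p | ∀ d, 0 ≤ coeff d p}
  zero_mem' d := by simp
  one_mem' d := by
    classical
    rw [coeff_one]
    split_ifs <;> simp
  add_mem' hp hq d := by
    rw [coeff_add]
    exact add_nonneg (hp d) (hq d)
  mul_mem' hp hq d := by
    classical
    rw [coeff_mul]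
    exact Finset.sum_nonneg fun _ _ ↦ mul_nonneg (hp _) (hq _)

variable {σ R}

theorem mem_monomialPositive {p : MvPolynomial σ R} :
    p ∈ monomialPositive σ R ↔ ∀ d, 0 ≤ coeff d p :=
  Iff.rfl

theorem X_mem_monomialPositive (i : σ) : X i ∈ monomialPositive σ R := fun d ↦ by
  classical
  rw [coeff_X]
  split_ifs <;> simp

end MvPolynomial

/-- for the sequence of polynomials
`(f₀, f₁, f₂, f₃) = (4x²y, (x+y)², x+y, 1)` in `ℝ[x,y]`, the differences `f₁² - f₀f₂` and
`f₂² - f₁f₃` are monomial-positive, but `f₁f₂ - f₀f₃ = x³ - x²y + 3xy² + y³` is not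
monomial-positive. Hence the analogue of `log-concave with no internal zeroes ⟹
bᵢbⱼ ≥ b_{i-1}b_{j+1}` fails for monomial-positive polynomials in place of nonnegative
reals. -/
theorem stmt_19 :
    let x : MvPolynomial (Fin 2) ℝ := X 0
    let y : MvPolynomial (Fin 2) ℝ := X 1
    let f0 := C 4 * x ^ 2 * y
    let f1 := (x + y) ^ 2
    let f2 := x + y
    let f3 : MvPolynomial (Fin 2) ℝ := 1
    (∀ d, 0 ≤ MvPolynomial.coeff d (f1 ^ 2 - f0 * f2)) ∧
    (∀ d, 0 ≤ MvPolynomial.coeff d (f2 ^ 2 - f1 * f3)) ∧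
    f1 * f2 - f0 * f3 = x ^ 3 - x ^ 2 * y + C 3 * x * y ^ 2 + y ^ 3 ∧
    ¬ (∀ d, 0 ≤ MvPolynomial.coeff d (f1 * f2 - f0 * f3)) := by
  intro x y f0 f1 f2 f3
  have hC3 : (C 3 : MvPolynomial (Fin 2) ℝ) = 3 := map_ofNat C 3
  have hC4 : (C 4 : MvPolynomial (Fin 2) ℝ) = 4 := map_ofNat C 4
  have h₀₂ : f1 ^ 2 - f0 * f2 = x ^ 4 + 2 * x ^ 2 * y ^ 2 + 4 * x * y ^ 3 + y ^ 4 := by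
    simp only [f0, f1, f2, hC4]
    ring
  have h₀₃ : f1 * f2 - f0 * f3 = x ^ 3 - x ^ 2 * y + C 3 * x * y ^ 2 + y ^ 3 := by
    simp only [f0, f1, f2, f3, hC3, hC4]
    ring
  have hx2y : coeff (Finsupp.single 0 2 + Finsupp.single 1 1) (f1 * f2 - f0 * f3) = -1 := by
    rw [h₀₃]
    simp [x, y, X, monomial_pow, monomial_mul, C_mul_monomial, coeff_monomial,
      Finsupp.ext_iff, Fin.forall_fin_two]
  refine ⟨?_, by simp [f1, f2, f3], h₀₃, fun h ↦ by linarith [h (.single 0 2 + .single 1 1)]⟩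
  have hx : x ∈ monomialPositive (Fin 2) ℝ := X_mem_monomialPositive 0
  have hy : y ∈ monomialPositive (Fin 2) ℝ := X_mem_monomialPositive 1
  rw [← mem_monomialPositive, h₀₂]
  exact add_mem (add_mem (add_mem (pow_mem hx 4)
    (mul_mem (mul_mem (ofNat_mem _ 2) (pow_mem hx 2)) (pow_mem hy 2)))
    (mul_mem (mul_mem (ofNat_mem _ 4) hx) (pow_mem hy 3))) (pow_mem hy 4)
end
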